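/- arXiv:2304.01099 — 11 statements merged into one kernel-verified Lean document; each statement's English description precedes it below -/
import Mathlib

section
/- Let G be a connected graph and let k be a non-negative integer. Then G has a perfect matching that contains a matching cut with at least k edges if and only if G has a perfect-extendable valid red-blue colouring with at least k bichromatic edges. -/
namespace Paper

variable {V : Type*}

/-- A matching of `G`: a set of edges of `G`, no two of which share an endpoint. -/
def IsMatching (G : SimpleGraph V) (M : Set (Sym2 V)) : Prop :=
  M ⊆ G.edgeSet ∧ ∀ e ∈ M, ∀ f ∈ M, ∀ v : V, v ∈ e → v ∈ f → e = f

/-- A matching cut of `G`: a matching `M` such that the vertex set can be partitioned into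
two non-empty sets `R` and `B` with `M` exactly the set of edges between `R` and `B`. -/
def IsMatchingCut (G : SimpleGraph V) (M : Set (Sym2 V)) : Prop :=
  IsMatching G M ∧ ∃ R B : Set V,
    R.Nonempty ∧ B.Nonempty ∧ Disjoint R B ∧ R ∪ B = Set.univ ∧
    ∀ u v : V, G.Adj u v → (s(u, v) ∈ M ↔ ((u ∈ R ∧ v ∈ B) ∨ (u ∈ B ∧ v ∈ R)))

/-- A red-blue colouring (red = `true`, blue = `false`) is valid if every vertex has at most one
neighbour of the opposite colour and both colours are used. -/
def ValidColouring (G : SimpleGraph V) (c : V → Bool) : Prop :=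
  (∀ v : V, {w | G.Adj v w ∧ c w ≠ c v}.Subsingleton) ∧
  (∃ v, c v = true) ∧ (∃ v, c v = false)

/-- An edge is bichromatic if its endpoints receive different colours. -/
def Bichromatic (c : V → Bool) (e : Sym2 V) : Prop :=
  ∃ u v : V, e = s(u, v) ∧ c u ≠ c v

/-- The set of bichromatic edges of `G` under the colouring `c`. -/
def bichromaticEdges (G : SimpleGraph V) (c : V → Bool) : Set (Sym2 V) :=
  {e | e ∈ G.edgeSet ∧ Bichromatic c e}

/-- A perfect matching of `G`: a matching saturating every vertex. -/
def IsPerfectMatching (G : SimpleGraph V) (M : Set (Sym2 V)) : Prop :=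
  IsMatching G M ∧ ∀ v : V, ∃ e ∈ M, v ∈ e

/-- A valid red-blue colouring is perfect-extendable if `G` has a perfect matching containing
all bichromatic edges. -/
def PerfectExtendable (G : SimpleGraph V) (c : V → Bool) : Prop :=
  ValidColouring G c ∧ ∃ P : Set (Sym2 V), IsPerfectMatching G P ∧ bichromaticEdges G c ⊆ P

/-- `G` contains an induced copy of `H`. -/
def HasInducedCopy {W : Type*} (H : SimpleGraph W) (G : SimpleGraph V) : Prop :=
  ∃ s : Set V, Nonempty (H ≃g G.induce s)

/-- `G` is `H`-free: no induced subgraph of `G` is isomorphic to `H`. -/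
def HFree {W : Type*} (G : SimpleGraph V) (H : SimpleGraph W) : Prop :=
  ¬ HasInducedCopy H G

/-- An edge cut of `G`: the set of edges between the two sides of a partition of the vertex set. -/
def IsEdgeCut (G : SimpleGraph V) (C : Set (Sym2 V)) : Prop :=
  C ⊆ G.edgeSet ∧ ∃ R B : Set V, Disjoint R B ∧ R ∪ B = Set.univ ∧
    ∀ u v : V, G.Adj u v → (s(u, v) ∈ C ↔ ((u ∈ R ∧ v ∈ B) ∨ (u ∈ B ∧ v ∈ R)))

end Paper


open Paper in
private lemma bich_iff {V : Type*} {c : V → Bool} {u v : V} :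
    Bichromatic c s(u, v) ↔ c u ≠ c v := by
  constructor
  · rintro ⟨a, b, hab, hne⟩
    rw [Sym2.eq_iff] at hab
    rcases hab with ⟨rfl, rfl⟩ | ⟨rfl, rfl⟩
    · exact hne
    · exact hne.symm
  · exact fun h => ⟨u, v, rfl, h⟩

open Paper in
theorem statement1 {V : Type*} [Fintype V] (G : SimpleGraph V) (hG : G.Connected) (k : ℕ) :
    (∃ P M : Set (Sym2 V), IsPerfectMatching G P ∧ M ⊆ P ∧ IsMatchingCut G M ∧ k ≤ M.ncard) ↔
    (∃ c : V → Bool, PerfectExtendable G c ∧ k ≤ (bichromaticEdges G c).ncard) := by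
  classical
  constructor
  · rintro ⟨P, M, hP, hMP, ⟨hMm, R, B, hR, hB, hdis, huniv, hiff⟩, hk⟩
    set c : V → Bool := fun v => decide (v ∈ R) with hc
    have hBR : ∀ v, v ∈ B ↔ v ∉ R := by
      intro v
      constructor
      · exact fun h hr => (Set.disjoint_left.mp hdis hr) h
      · intro h
        have hv : v ∈ R ∪ B := huniv ▸ Set.mem_univ v
        rcases hv with h' | h'
        · exact absurd h' h
        · exact h'
    have key : ∀ u v : V, (c u ≠ c v) ↔ ((u ∈ R ∧ v ∈ B) ∨ (u ∈ B ∧ v ∈ R)) := by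
      intro u v
      simp only [hc, Ne, decide_eq_decide, hBR]
      tauto
    have hbe : bichromaticEdges G c = M := by
      ext e
      induction e using Sym2.ind with
      | _ u v =>
        simp only [bichromaticEdges, Set.mem_setOf_eq, bich_iff, SimpleGraph.mem_edgeSet]
        constructor
        · rintro ⟨hadj, hne⟩
          exact (hiff u v hadj).mpr ((key u v).mp hne)
        · intro hm
          have hadj : G.Adj u v := (G.mem_edgeSet).mp (hMm.1 hm)
          exact ⟨hadj, (key u v).mpr ((hiff u v hadj).mp hm)⟩
    refine ⟨c, ⟨⟨?_, ?_, ?_⟩, P, hP, hbe ▸ hMP⟩, hbe ▸ hk⟩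
    · intro v w1 hw1 w2 hw2
      have e1 : s(v, w1) ∈ M := by
        rw [← hbe]
        exact ⟨(G.mem_edgeSet).mpr hw1.1, bich_iff.mpr (Ne.symm hw1.2)⟩
      have e2 : s(v, w2) ∈ M := by
        rw [← hbe]
        exact ⟨(G.mem_edgeSet).mpr hw2.1, bich_iff.mpr (Ne.symm hw2.2)⟩
      have := hMm.2 _ e1 _ e2 v (Sym2.mem_mk_left v w1) (Sym2.mem_mk_left v w2)
      exact Sym2.congr_right.mp this
    · obtain ⟨r, hr⟩ := hR
      exact ⟨r, by simp [hc, hr]⟩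
    · obtain ⟨b, hb⟩ := hB
      exact ⟨b, by simp [hc, (hBR b).mp hb]⟩
  · rintro ⟨c, ⟨⟨hval, ⟨r, hr⟩, ⟨b, hb⟩⟩, P, hP, hsub⟩, hk⟩
    refine ⟨P, bichromaticEdges G c, hP, hsub, ⟨?_, ?_⟩, hk⟩
    · exact ⟨fun e he => he.1,
        fun e he f hf v hve hvf => hP.1.2 e (hsub he) f (hsub hf) v hve hvf⟩
    · refine ⟨{v | c v = true}, {v | c v = false}, ⟨r, hr⟩, ⟨b, hb⟩, ?_, ?_, ?_⟩
      · rw [Set.disjoint_left]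
        intro v hv hv'
        simp only [Set.mem_setOf_eq] at hv hv'
        rw [hv] at hv'
        simp at hv'
      · ext v
        simp only [Set.mem_union, Set.mem_setOf_eq, Set.mem_univ, iff_true]
        cases c v <;> simp
      · intro u v hadj
        simp only [Set.mem_setOf_eq]
        constructor
        · rintro ⟨_, hbi⟩
          have hne := bich_iff.mp hbi
          cases hu : c u <;> cases hv : c v <;> simp_all
        · rintro (⟨hu, hv⟩ | ⟨hu, hv⟩) <;>
            exact ⟨(G.mem_edgeSet).mpr hadj, bich_iff.mpr (by simp [hu, hv])⟩
end

section
/- Let G be a graph with a valid red-blue colouring and let A and B be disjoint subsets of the vertex set of G with |A| ≥ 2 and |B| ≥ 3 such that every vertex of A is adjacent to every vertex of B. Then all vertices of A ∪ B receive the same colour. -/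
open Paper in
theorem statement3 {V : Type*} [Fintype V] (G : SimpleGraph V) (c : V → Bool)
    (hc : ValidColouring G c) (A B : Set V) (hdisj : Disjoint A B)
    (hA : 2 ≤ A.ncard) (hB : 3 ≤ B.ncard)
    (hadj : ∀ a ∈ A, ∀ b ∈ B, G.Adj a b) :
    ∀ u ∈ A ∪ B, ∀ v ∈ A ∪ B, c u = c v := by

  obtain ⟨hsub, -, -⟩ := hc
  obtain ⟨a1, ha1, a2, ha2, ha12⟩ := (Set.one_lt_ncard A.toFinite).mp (by omega)
  obtain ⟨b1, hb1, b2, hb2, b3, hb3, h12, h13, h23⟩ :=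
    (Set.two_lt_ncard B.toFinite).mp (by omega)
  -- two of b1,b2,b3 share a colour
  have hpq : ∃ p q, p ∈ B ∧ q ∈ B ∧ p ≠ q ∧ c p = c q := by
    have h : c b1 = c b2 ∨ c b1 = c b3 ∨ c b2 = c b3 := by
      cases c b1 <;> cases c b2 <;> cases c b3 <;> simp
    rcases h with h | h | h
    · exact ⟨b1, b2, hb1, hb2, h12, h⟩
    · exact ⟨b1, b3, hb1, hb3, h13, h⟩
    · exact ⟨b2, b3, hb2, hb3, h23, h⟩
  obtain ⟨p, q, hp, hq, hpq', hcpq⟩ := hpq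
  have hAcol : ∀ a ∈ A, c a = c p := by
    intro a ha
    by_contra h
    have hp' : p ∈ {w | G.Adj a w ∧ c w ≠ c a} := ⟨hadj a ha p hp, fun e => h e.symm⟩
    have hq' : q ∈ {w | G.Adj a w ∧ c w ≠ c a} :=
      ⟨hadj a ha q hq, fun e => h (hcpq.trans e).symm⟩
    exact hpq' (hsub a hp' hq')
  have hBcol : ∀ b ∈ B, c b = c p := by
    intro b hb
    by_contra h
    have h1 : a1 ∈ {w | G.Adj b w ∧ c w ≠ c b} :=
      ⟨(hadj a1 ha1 b hb).symm, fun e => h ((hAcol a1 ha1) ▸ e).symm⟩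
    have h2 : a2 ∈ {w | G.Adj b w ∧ c w ≠ c b} :=
      ⟨(hadj a2 ha2 b hb).symm, fun e => h ((hAcol a2 ha2) ▸ e).symm⟩
    exact ha12 (hsub b h1 h2)
  have hall : ∀ w ∈ A ∪ B, c w = c p := by
    rintro w (hw | hw)
    · exact hAcol w hw
    · exact hBcol w hw
  intro u hu v hv
  rw [hall u hu, hall v hv]
end

section
/- Let G be a graph with a valid red-blue colouring and let Z be a subset of the vertex set of G such that every vertex of Z has a blue neighbour outside Z. Then no edge of G with both endpoints in Z is bichromatic; in particular, every connected component of the subgraph of G induced by Z is monochromatic (all its vertices receive the same colour). -/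
open Paper in
theorem statement4 {V : Type*} (G : SimpleGraph V) (c : V → Bool)
    (hc : ValidColouring G c) (Z : Set V)
    (hZ : ∀ z ∈ Z, ∃ w, w ∉ Z ∧ G.Adj z w ∧ c w = false) :
    (∀ u ∈ Z, ∀ v ∈ Z, G.Adj u v → c u = c v) ∧
    (∀ u v : Z, (G.induce Z).Reachable u v → c ↑u = c ↑v) := by
  have key : ∀ u ∈ Z, ∀ v ∈ Z, G.Adj u v → c u = c v := by
    have main : ∀ u ∈ Z, ∀ v ∈ Z, G.Adj u v → c u = false → c v = true → False := by
      intro u hu v hv hadj hcu hcv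
      obtain ⟨w, hwZ, hwadj, hwc⟩ := hZ v hv
      have h1 : u ∈ {x | G.Adj v x ∧ c x ≠ c v} := ⟨hadj.symm, by simp [hcu, hcv]⟩
      have h2 : w ∈ {x | G.Adj v x ∧ c x ≠ c v} := ⟨hwadj, by simp [hwc, hcv]⟩
      have := hc.1 v h1 h2
      exact hwZ (this ▸ hu)
    intro u hu v hv hadj
    by_contra hne
    rcases Bool.eq_false_or_eq_true (c u) with h | h
    · have hv' : c v = false := by
        cases hcv : c v
        · rfl
        · exact absurd (h.trans hcv.symm) hne
      exact main v hv u hu hadj.symm hv' h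
    · have hv' : c v = true := by
        cases hcv : c v
        · exact absurd (h.trans hcv.symm) hne
        · rfl
      exact main u hu v hv hadj h hv'
  refine ⟨key, ?_⟩
  intro u v h
  obtain ⟨p⟩ := h
  induction p with
  | nil => rfl
  | cons hadj _ ih =>
    rename_i a b _ _
    exact (key a a.2 b b.2 hadj).trans ih
end

section
/- Let X be a finite set with |X| = 3q for some integer q ≥ 1 and let 𝒮 be a collection of 3-element subsets of X. Then the graph G(X,𝒮) has a matching cut with at least 3q edges if and only if 𝒮 contains a subcollection of pairwise disjoint sets whose union is X. -/
namespace Paper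

variable {α : Type*} [DecidableEq α]

/-- Vertex type of the graph `G(X,𝒮)`: the elements of `X` together with the pairs `(S, x)`
with `S ∈ 𝒮` and `x ∈ S`. -/
def CoverVertex (X : Finset α) (𝒮 : Finset (Finset α)) : Type _ :=
  {x : α // x ∈ X} ⊕ {p : Finset α × α // p.1 ∈ 𝒮 ∧ p.2 ∈ p.1}

/-- The graph `G(X,𝒮)`: the elements of `X` form a clique, for each `S ∈ 𝒮` the pairs
`(S, x)` with `x ∈ S` form a clique, and each `x ∈ X` is joined to every `(S, x)`. -/
def coverGraph (X : Finset α) (𝒮 : Finset (Finset α)) : SimpleGraph (CoverVertex X 𝒮) where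
  Adj u v := match u, v with
    | Sum.inl x, Sum.inl y => (x : α) ≠ (y : α)
    | Sum.inl x, Sum.inr p => (x : α) = p.1.2
    | Sum.inr p, Sum.inl x => (x : α) = p.1.2
    | Sum.inr p, Sum.inr q => p.1.1 = q.1.1 ∧ p.1.2 ≠ q.1.2
  symm := by
    constructor
    rintro (x | p) (y | q) h
    · exact Ne.symm h
    · exact h
    · exact h
    · exact ⟨(h.1).symm, (h.2).symm⟩
  loopless := by
    constructor
    rintro (x | p) h
    · exact h rfl
    · exact h.2 rfl

end Paper

namespace Paper

variable {α : Type*} [DecidableEq α]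

instance instFinCV (X : Finset α) (𝒮 : Finset (Finset α)) : Finite (CoverVertex X 𝒮) := by
  have : Finite {p : Finset α × α // p.1 ∈ 𝒮 ∧ p.2 ∈ p.1} := by
    apply Finite.of_injective (fun p => (⟨⟨p.1.1, p.2.1⟩, ⟨p.1.2, p.2.2⟩⟩ :
      Σ S : {S // S ∈ 𝒮}, {x // x ∈ S.1}))
    rintro ⟨⟨S, x⟩, hS, hx⟩ ⟨⟨T, y⟩, hT, hy⟩ h
    simp only [Sigma.mk.inj_iff, Subtype.mk.injEq] at h
    obtain ⟨h1, h2⟩ := h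
    subst h1
    simp only [heq_eq_eq, Subtype.mk.injEq] at h2
    subst h2
    rfl
  unfold CoverVertex
  infer_instance

lemma forward_aux (X : Finset α) (𝒮 : Finset (Finset α)) (q : ℕ) (hq : 1 ≤ q)
    (hX : X.card = 3 * q) (h𝒮 : ∀ S ∈ 𝒮, S.card = 3 ∧ S ⊆ X)
    (M : Set (Sym2 (CoverVertex X 𝒮))) (hm : IsMatching (coverGraph X 𝒮) M)
    (R B : Set (CoverVertex X 𝒮)) (hd : Disjoint R B) (hu : R ∪ B = Set.univ)
    (hcut : ∀ u v, (coverGraph X 𝒮).Adj u v →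
      (s(u,v) ∈ M ↔ (u ∈ R ∧ v ∈ B) ∨ (u ∈ B ∧ v ∈ R)))
    (hcard : 3 * q ≤ M.ncard)
    (x0 : α) (hx0 : x0 ∈ X) (hx0R : (Sum.inl ⟨x0, hx0⟩ : CoverVertex X 𝒮) ∈ R) :
    ∃ 𝒞 : Finset (Finset α), 𝒞 ⊆ 𝒮 ∧
      (∀ S ∈ 𝒞, ∀ T ∈ 𝒞, S ≠ T → Disjoint S T) ∧ 𝒞.biUnion id = X := by
  classical
  have hmem : ∀ v : CoverVertex X 𝒮, v ∈ R ∨ v ∈ B := by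
    intro v
    have : v ∈ R ∪ B := hu ▸ Set.mem_univ v
    exact this
  have hnot : ∀ v : CoverVertex X 𝒮, v ∈ R → v ∉ B := by
    intro v hv hv'
    exact Set.disjoint_left.mp hd hv hv'
  -- triangle lemma
  have htri : ∀ a b c : CoverVertex X 𝒮, (coverGraph X 𝒮).Adj a b → (coverGraph X 𝒮).Adj a c → (coverGraph X 𝒮).Adj b c →
      a ∈ R → b ∈ B → False := by
    intro a b c hab hac hbc haR hbB
    have h1 : s(a, b) ∈ M := (hcut a b hab).2 (Or.inl ⟨haR, hbB⟩)
    rcases hmem c with hcR | hcB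
    · have h2 : s(c, b) ∈ M := (hcut c b hbc.symm).2 (Or.inl ⟨hcR, hbB⟩)
      have := hm.2 _ h1 _ h2 b (Sym2.mem_mk_right a b) (Sym2.mem_mk_right c b)
      rw [Sym2.eq_iff] at this
      rcases this with ⟨h, _⟩ | ⟨h, h'⟩
      · exact hac.ne h
      · exact hab.ne h
    · have h2 : s(a, c) ∈ M := (hcut a c hac).2 (Or.inl ⟨haR, hcB⟩)
      have := hm.2 _ h1 _ h2 a (Sym2.mem_mk_left a b) (Sym2.mem_mk_left a c)
      rw [Sym2.eq_iff] at this
      rcases this with ⟨_, h⟩ | ⟨h, h'⟩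
      · exact hbc.ne h
      · exact hab.ne h'.symm
  -- all of X is in R
  have hXall : ∀ (x : α) (hx : x ∈ X), (Sum.inl ⟨x, hx⟩ : CoverVertex X 𝒮) ∈ R := by
    intro x hx
    rcases hmem (Sum.inl ⟨x, hx⟩) with h | hB
    · exact h
    exfalso
    have hxne : x ≠ x0 := by
      rintro rfl
      exact hnot _ hx0R hB
    have hz : ((X.erase x0).erase x).Nonempty := by
      rw [← Finset.card_pos, Finset.card_erase_of_mem (Finset.mem_erase.2 ⟨hxne, hx⟩),
        Finset.card_erase_of_mem hx0, hX]
      omega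
    obtain ⟨z, hz⟩ := hz
    obtain ⟨hzx, hz'⟩ := Finset.mem_erase.1 hz
    obtain ⟨hzx0, hzX⟩ := Finset.mem_erase.1 hz'
    exact htri (Sum.inl ⟨x0, hx0⟩) (Sum.inl ⟨x, hx⟩) (Sum.inl ⟨z, hzX⟩)
      (by exact Ne.symm hxne) (by exact Ne.symm hzx0) (by exact Ne.symm hzx) hx0R hB
  -- triangles are on one side
  have hSall : ∀ (S : Finset α) (hS : S ∈ 𝒮) (x y : α) (hx : x ∈ S) (hy : y ∈ S),
      (Sum.inr ⟨(S, x), ⟨hS, hx⟩⟩ : CoverVertex X 𝒮) ∈ B →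
      (Sum.inr ⟨(S, y), ⟨hS, hy⟩⟩ : CoverVertex X 𝒮) ∈ B := by
    intro S hS x y hx hy hxB
    rcases hmem (Sum.inr ⟨(S, y), ⟨hS, hy⟩⟩) with hyR | h
    · exfalso
      have hxy : y ≠ x := by
        rintro rfl
        exact hnot _ hyR hxB
      have hz : ((S.erase x).erase y).Nonempty := by
        rw [← Finset.card_pos, Finset.card_erase_of_mem (Finset.mem_erase.2 ⟨hxy, hy⟩),
          Finset.card_erase_of_mem hx, (h𝒮 S hS).1]
        omega
      obtain ⟨z, hz⟩ := hz
      obtain ⟨hzy, hz'⟩ := Finset.mem_erase.1 hz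
      obtain ⟨hzx, hzS⟩ := Finset.mem_erase.1 hz'
      exact htri (Sum.inr ⟨(S, y), ⟨hS, hy⟩⟩) (Sum.inr ⟨(S, x), ⟨hS, hx⟩⟩)
        (Sum.inr ⟨(S, z), ⟨hS, hzS⟩⟩) ⟨rfl, hxy⟩ ⟨rfl, Ne.symm hzy⟩ ⟨rfl, Ne.symm hzx⟩ hyR hxB
    · exact h
  set 𝒞 : Finset (Finset α) := 𝒮.filter (fun S =>
    ∃ x, ∃ h : S ∈ 𝒮 ∧ x ∈ S, (Sum.inr ⟨(S, x), h⟩ : CoverVertex X 𝒮) ∈ B) with h𝒞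
  have h𝒞sub : 𝒞 ⊆ 𝒮 := Finset.filter_subset _ _
  have hinB : ∀ (p : {p : Finset α × α // p.1 ∈ 𝒮 ∧ p.2 ∈ p.1}),
      (Sum.inr p : CoverVertex X 𝒮) ∈ B ↔ p.1.1 ∈ 𝒞 := by
    intro p
    constructor
    · intro hp
      refine Finset.mem_filter.2 ⟨p.2.1, ⟨p.1.2, ⟨p.2.1, p.2.2⟩, ?_⟩⟩
      convert hp
    · intro hp
      obtain ⟨_, x, h, hB⟩ := Finset.mem_filter.1 hp
      have := hSall p.1.1 p.2.1 x p.1.2 (by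
        have := h.2
        convert this) p.2.2 (by convert hB)
      convert this
  -- every edge of M is a matching edge from X-side to a triangle in 𝒞
  have hstruct : ∀ e ∈ M, ∃ (x : α) (hx : x ∈ X) (S : Finset α) (h : S ∈ 𝒮 ∧ x ∈ S),
      S ∈ 𝒞 ∧ e = s(Sum.inl ⟨x, hx⟩, Sum.inr ⟨(S, x), h⟩) := by
    intro e he
    have heE : e ∈ (coverGraph X 𝒮).edgeSet := hm.1 he
    induction e with
    | h u v =>
      have hadj : (coverGraph X 𝒮).Adj u v := heE
      have hcross := (hcut u v hadj).1 he
      rcases u with ⟨x, hx⟩ | ⟨⟨S, y⟩, hS, hy⟩ <;> rcases v with ⟨x', hx'⟩ | ⟨⟨S', y'⟩, hS', hy'⟩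
      · exfalso
        rcases hcross with ⟨h1, h2⟩ | ⟨h1, h2⟩
        · exact hnot _ (hXall x' hx') h2
        · exact hnot _ (hXall x hx) h1
      · have hxp : x = y' := hadj
        subst hxp
        have hxR : (Sum.inl ⟨x, hx⟩ : CoverVertex X 𝒮) ∈ R := hXall x hx
        have hpB : (Sum.inr ⟨(S', x), ⟨hS', hy'⟩⟩ : CoverVertex X 𝒮) ∈ B := by
          rcases hcross with ⟨h1, h2⟩ | ⟨h1, h2⟩
          · exact h2
          · exact absurd h1 (hnot _ hxR)
        exact ⟨x, hx, S', ⟨hS', hy'⟩, (hinB _).1 hpB, rfl⟩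
      · have hxp : x' = y := hadj
        subst hxp
        have hxR : (Sum.inl ⟨x', hx'⟩ : CoverVertex X 𝒮) ∈ R := hXall x' hx'
        have hpB : (Sum.inr ⟨(S, x'), ⟨hS, hy⟩⟩ : CoverVertex X 𝒮) ∈ B := by
          rcases hcross with ⟨h1, h2⟩ | ⟨h1, h2⟩
          · exact absurd h2 (hnot _ hxR)
          · exact h1
        exact ⟨x', hx', S, ⟨hS, hy⟩, (hinB _).1 hpB, Sym2.eq_swap⟩
      · exfalso
        obtain ⟨hpq, hne⟩ := hadj
        dsimp only at hpq hne
        subst hpq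
        have key : (Sum.inr ⟨(S, y), ⟨hS, hy⟩⟩ : CoverVertex X 𝒮) ∈ B ↔
            (Sum.inr ⟨(S, y'), ⟨hS', hy'⟩⟩ : CoverVertex X 𝒮) ∈ B := by
          rw [hinB, hinB]
        rcases hcross with ⟨h1, h2⟩ | ⟨h1, h2⟩
        · exact hnot _ h1 (key.2 h2)
        · exact hnot _ h2 (key.1 h1)
  -- disjointness
  have hdisj : ∀ S ∈ 𝒞, ∀ T ∈ 𝒞, S ≠ T → Disjoint S T := by
    intro S hS T hT hST
    rw [Finset.disjoint_left]
    intro x hxS hxT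
    have hS𝒮 := h𝒞sub hS
    have hT𝒮 := h𝒞sub hT
    have hxX : x ∈ X := (h𝒮 S hS𝒮).2 hxS
    have e1 : s(Sum.inl ⟨x, hxX⟩, (Sum.inr ⟨(S, x), ⟨hS𝒮, hxS⟩⟩ : CoverVertex X 𝒮)) ∈ M :=
      (hcut _ _ (by exact rfl)).2 (Or.inl ⟨hXall x hxX, (hinB _).2 hS⟩)
    have e2 : s(Sum.inl ⟨x, hxX⟩, (Sum.inr ⟨(T, x), ⟨hT𝒮, hxT⟩⟩ : CoverVertex X 𝒮)) ∈ M :=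
      (hcut _ _ (by exact rfl)).2 (Or.inl ⟨hXall x hxX, (hinB _).2 hT⟩)
    have := hm.2 _ e1 _ e2 _ (Sym2.mem_mk_left _ _) (Sym2.mem_mk_left _ _)
    have this := Sym2.eq_iff.1 this
    rcases this with ⟨_, h⟩ | ⟨h, _⟩
    · apply hST
      have := Sum.inr.inj h
      exact congrArg Prod.fst (congrArg Subtype.val this)
    · exact absurd h (by simp)
  -- cardinality: M injects into the union of 𝒞
  refine ⟨𝒞, h𝒞sub, hdisj, ?_⟩
  have hbsub : 𝒞.biUnion id ⊆ X := by
    intro x hx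
    obtain ⟨S, hS, hxS⟩ := Finset.mem_biUnion.1 hx
    exact (h𝒮 S (h𝒞sub hS)).2 hxS
  refine Finset.eq_of_subset_of_card_le hbsub ?_
  rw [hX]
  refine le_trans hcard (le_of_le_of_eq ?_ (Set.ncard_coe_finset (𝒞.biUnion id)))
  set f : Sym2 (CoverVertex X 𝒮) → α := fun e =>
    if h : ∃ (x : α) (hx : x ∈ X) (S : Finset α) (hp : S ∈ 𝒮 ∧ x ∈ S) (_ : S ∈ 𝒞),
        e = s(Sum.inl ⟨x, hx⟩, Sum.inr ⟨(S, x), hp⟩) then h.choose else x0 with hf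
  have hfspec : ∀ e ∈ M, ∃ (hx : f e ∈ X) (S : Finset α) (hp : S ∈ 𝒮 ∧ f e ∈ S),
      S ∈ 𝒞 ∧ e = s(Sum.inl ⟨f e, hx⟩, Sum.inr ⟨(S, f e), hp⟩) := by
    intro e he
    obtain ⟨x, hx, S, hp, hS𝒞, heq⟩ := hstruct e he
    have hex : ∃ (x : α) (hx : x ∈ X) (S : Finset α) (hp : S ∈ 𝒮 ∧ x ∈ S) (_ : S ∈ 𝒞),
        e = s(Sum.inl ⟨x, hx⟩, Sum.inr ⟨(S, x), hp⟩) := ⟨x, hx, S, hp, hS𝒞, heq⟩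
    simp only [hf, dif_pos hex]
    obtain ⟨hx', S', hp', hS𝒞', heq'⟩ := hex.choose_spec
    exact ⟨hx', S', hp', hS𝒞', heq'⟩
  apply Set.ncard_le_ncard_of_injOn f
  · intro e he
    obtain ⟨hx, S, hp, hS𝒞, _⟩ := hfspec e he
    exact Finset.mem_coe.2 (Finset.mem_biUnion.2 ⟨S, hS𝒞, hp.2⟩)
  · intro e he e' he' hfe
    obtain ⟨hx, S, hp, hS𝒞, heq⟩ := hfspec e he
    obtain ⟨hx', S', hp', hS𝒞', heq'⟩ := hfspec e' he'
    have hv := Sym2.mem_mk_left (Sum.inl ⟨f e, hx⟩ : CoverVertex X 𝒮) (Sum.inr ⟨(S, f e), hp⟩)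
    rw [← heq] at hv
    have hv' := Sym2.mem_mk_left (Sum.inl ⟨f e', hx'⟩ : CoverVertex X 𝒮) (Sum.inr ⟨(S', f e'), hp'⟩)
    rw [← heq'] at hv'
    have hee : (Sum.inl ⟨f e, hx⟩ : CoverVertex X 𝒮) = Sum.inl ⟨f e', hx'⟩ := by
      congr 1
      exact Subtype.ext hfe
    rw [hee] at hv
    exact hm.2 _ he _ he' _ hv hv'


lemma backward_aux (X : Finset α) (𝒮 : Finset (Finset α)) (q : ℕ) (hq : 1 ≤ q)
    (hX : X.card = 3 * q) (h𝒮 : ∀ S ∈ 𝒮, S.card = 3 ∧ S ⊆ X)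
    (𝒞 : Finset (Finset α)) (h𝒞sub : 𝒞 ⊆ 𝒮)
    (hdisj : ∀ S ∈ 𝒞, ∀ T ∈ 𝒞, S ≠ T → Disjoint S T)
    (hcover : 𝒞.biUnion id = X) :
    ∃ M : Set (Sym2 (CoverVertex X 𝒮)), IsMatchingCut (coverGraph X 𝒮) M ∧ 3 * q ≤ M.ncard := by
  classical
  have hXne : X.Nonempty := by
    rw [← Finset.card_pos, hX]; omega
  obtain ⟨x0, hx0⟩ := hXne
  have hcov : ∀ x ∈ X, ∃ S ∈ 𝒞, x ∈ S := by
    intro x hx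
    have : x ∈ 𝒞.biUnion id := hcover ▸ hx
    obtain ⟨S, hS, hxS⟩ := Finset.mem_biUnion.1 this
    exact ⟨S, hS, hxS⟩
  have huniq : ∀ S ∈ 𝒞, ∀ T ∈ 𝒞, ∀ x, x ∈ S → x ∈ T → S = T := by
    intro S hS T hT x hxS hxT
    by_contra h
    exact Finset.disjoint_left.1 (hdisj S hS T hT h) hxS hxT
  set B : Set (CoverVertex X 𝒮) :=
    {v | ∃ p : {p : Finset α × α // p.1 ∈ 𝒮 ∧ p.2 ∈ p.1}, v = Sum.inr p ∧ p.1.1 ∈ 𝒞} with hB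
  have hinlR : ∀ (x : α) (hx : x ∈ X), (Sum.inl ⟨x, hx⟩ : CoverVertex X 𝒮) ∉ B := by
    rintro x hx ⟨p, hp, -⟩
    exact Sum.inl_ne_inr hp
  have hinrB : ∀ (p : {p : Finset α × α // p.1 ∈ 𝒮 ∧ p.2 ∈ p.1}),
      (Sum.inr p : CoverVertex X 𝒮) ∈ B ↔ p.1.1 ∈ 𝒞 := by
    intro p
    constructor
    · rintro ⟨p', hp', h⟩
      cases Sum.inr.inj hp'
      exact h
    · intro h
      exact ⟨p, rfl, h⟩
  set M : Set (Sym2 (CoverVertex X 𝒮)) :=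
    {e | ∃ (x : α) (hx : x ∈ X) (S : Finset α) (hp : S ∈ 𝒮 ∧ x ∈ S),
      S ∈ 𝒞 ∧ e = s(Sum.inl ⟨x, hx⟩, Sum.inr ⟨(S, x), hp⟩)} with hM
  have hmatch : IsMatching (coverGraph X 𝒮) M := by
    constructor
    · rintro e ⟨x, hx, S, hp, hS𝒞, rfl⟩
      refine ((coverGraph X 𝒮).mem_edgeSet).2 ?_
      exact rfl
    · rintro e ⟨x, hx, S, hp, hS𝒞, rfl⟩ f ⟨y, hy, T, hp', hT𝒞, rfl⟩ v hve hvf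
      replace hve := Sym2.mem_iff.1 hve
      replace hvf := Sym2.mem_iff.1 hvf
      have hxy : x = y ∧ S = T := by
        rcases hve with rfl | rfl <;> rcases hvf with h | h
        · obtain rfl : x = y := Subtype.mk.injEq _ _ _ _ ▸ (Sum.inl.inj h)
          exact ⟨rfl, huniq S hS𝒞 T hT𝒞 x hp.2 hp'.2⟩
        · exact absurd h (by simp)
        · exact absurd h (by simp)
        · obtain h' := Sum.inr.inj h
          have h'' : (S, x) = (T, y) := congrArg Subtype.val h'
          exact ⟨(Prod.mk.injEq _ _ _ _ ▸ h'').2, (Prod.mk.injEq _ _ _ _ ▸ h'').1⟩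
      obtain ⟨rfl, rfl⟩ := hxy
      rfl
  refine ⟨M, ⟨hmatch, Bᶜ, B, ?_, ?_, disjoint_compl_left, Set.compl_union_self B, ?_⟩, ?_⟩
  · exact ⟨Sum.inl ⟨x0, hx0⟩, hinlR x0 hx0⟩
  · obtain ⟨S0, hS0, hx0S0⟩ := hcov x0 hx0
    exact ⟨Sum.inr ⟨(S0, x0), ⟨h𝒞sub hS0, hx0S0⟩⟩, (hinrB _).2 hS0⟩
  · rintro (⟨x, hx⟩ | ⟨⟨S, y⟩, hS, hy⟩) (⟨x', hx'⟩ | ⟨⟨S', y'⟩, hS', hy'⟩) hadj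
    · constructor
      · rintro ⟨a, ha, S, hp, hS𝒞, heq⟩
        replace heq := Sym2.eq_iff.1 heq
        rcases heq with ⟨h1, h2⟩ | ⟨h1, h2⟩
        · exact absurd h2 (by simp)
        · exact absurd h1 (by simp)
      · rintro (⟨-, h⟩ | ⟨h, -⟩) <;> exact absurd h (hinlR _ _)
    · have hadj' : x = y' := hadj
      subst hadj'
      constructor
      · rintro ⟨a, ha, S, hp, hS𝒞, heq⟩
        replace heq := Sym2.eq_iff.1 heq
        rcases heq with ⟨h1, h2⟩ | ⟨h1, h2⟩
        · left
          refine ⟨hinlR x hx, ?_⟩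
          rw [h2]
          exact (hinrB _).2 hS𝒞
        · exact absurd h1 (by simp)
      · rintro (⟨-, h⟩ | ⟨h, -⟩)
        · have hS'𝒞 : S' ∈ 𝒞 := (hinrB _).1 h
          exact ⟨x, hx, S', ⟨hS', hy'⟩, hS'𝒞, rfl⟩
        · exact absurd h (hinlR _ _)
    · have hadj' : x' = y := hadj
      subst hadj'
      constructor
      · rintro ⟨a, ha, S'', hp, hS𝒞, heq⟩
        replace heq := Sym2.eq_iff.1 heq
        rcases heq with ⟨h1, h2⟩ | ⟨h1, h2⟩
        · exact absurd h1 (by simp)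
        · right
          refine ⟨?_, hinlR x' hx'⟩
          rw [h1]
          exact (hinrB _).2 hS𝒞
      · rintro (⟨-, h⟩ | ⟨h, -⟩)
        · exact absurd h (hinlR _ _)
        · have hS𝒞 : S ∈ 𝒞 := (hinrB _).1 h
          exact ⟨x', hx', S, ⟨hS, hy⟩, hS𝒞, Sym2.eq_swap⟩
    · obtain ⟨h1, h2⟩ := hadj
      dsimp only at h1 h2
      subst h1
      constructor
      · rintro ⟨a, ha, S'', hp, hS𝒞, heq⟩
        replace heq := Sym2.eq_iff.1 heq
        rcases heq with ⟨h1, -⟩ | ⟨-, h1⟩ <;> exact absurd h1 (by simp)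
      · rintro (⟨h', h⟩ | ⟨h, h'⟩)
        · exact (h' ((hinrB ⟨(S, y), ⟨hS, hy⟩⟩).2 ((hinrB ⟨(S, y'), ⟨hS', hy'⟩⟩).1 h))).elim
        · exact (h' ((hinrB ⟨(S, y'), ⟨hS', hy'⟩⟩).2 ((hinrB ⟨(S, y), ⟨hS, hy⟩⟩).1 h))).elim
  · set f : α → Sym2 (CoverVertex X 𝒮) := fun x =>
      if h : ∃ (hx : x ∈ X) (S : Finset α) (hp : S ∈ 𝒮 ∧ x ∈ S), S ∈ 𝒞 then
        s(Sum.inl ⟨x, h.choose⟩,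
          Sum.inr ⟨(h.choose_spec.choose, x), h.choose_spec.choose_spec.choose⟩)
      else s(Sum.inl ⟨x0, hx0⟩, Sum.inl ⟨x0, hx0⟩) with hf
    have hfspec : ∀ x ∈ X, ∃ (hx : x ∈ X) (S : Finset α) (hp : S ∈ 𝒮 ∧ x ∈ S),
        S ∈ 𝒞 ∧ f x = s(Sum.inl ⟨x, hx⟩, Sum.inr ⟨(S, x), hp⟩) := by
      intro x hx
      obtain ⟨S, hS𝒞, hxS⟩ := hcov x hx
      have hex : ∃ (hx : x ∈ X) (S : Finset α) (hp : S ∈ 𝒮 ∧ x ∈ S), S ∈ 𝒞 :=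
        ⟨hx, S, ⟨h𝒞sub hS𝒞, hxS⟩, hS𝒞⟩
      refine ⟨hex.choose, hex.choose_spec.choose, hex.choose_spec.choose_spec.choose,
        hex.choose_spec.choose_spec.choose_spec, ?_⟩
      simp only [hf, dif_pos hex]
      rfl
    have hle := Set.ncard_le_ncard_of_injOn f (s := (↑X : Set α)) (t := M) ?_ ?_ (Set.toFinite M)
    · rwa [Set.ncard_coe_finset, hX] at hle
    · intro x hx
      obtain ⟨hx', S, hp, hS𝒞, heq⟩ := hfspec x hx
      exact ⟨x, hx', S, hp, hS𝒞, heq⟩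
    · intro x hx y hy hfe
      obtain ⟨hx', S, hp, hS𝒞, heq⟩ := hfspec x hx
      obtain ⟨hy', T, hp', hT𝒞, heq'⟩ := hfspec y hy
      rw [heq, heq'] at hfe
      replace hfe := Sym2.eq_iff.1 hfe
      rcases hfe with ⟨h1, -⟩ | ⟨h1, -⟩
      · exact congrArg Subtype.val (Sum.inl.inj h1)
      · exact absurd h1 (by simp)


end Paper

open Paper in
theorem statement6 {α : Type*} [DecidableEq α] (X : Finset α) (𝒮 : Finset (Finset α))
    (q : ℕ) (hq : 1 ≤ q) (hX : X.card = 3 * q)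
    (h𝒮 : ∀ S ∈ 𝒮, S.card = 3 ∧ S ⊆ X) :
    (∃ M : Set (Sym2 (CoverVertex X 𝒮)), IsMatchingCut (coverGraph X 𝒮) M ∧ 3 * q ≤ M.ncard) ↔
    (∃ 𝒞 : Finset (Finset α), 𝒞 ⊆ 𝒮 ∧
      (∀ S ∈ 𝒞, ∀ T ∈ 𝒞, S ≠ T → Disjoint S T) ∧ 𝒞.biUnion id = X) := by
  constructor
  · rintro ⟨M, ⟨hm, R, B, hR, hB, hd, hu, hcut⟩, hcard⟩
    have hXne : X.Nonempty := by rw [← Finset.card_pos, hX]; omega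
    obtain ⟨x0, hx0⟩ := hXne
    have hmem : (Sum.inl ⟨x0, hx0⟩ : CoverVertex X 𝒮) ∈ R ∪ B := hu ▸ Set.mem_univ _
    rcases hmem with h | h
    · exact forward_aux X 𝒮 q hq hX h𝒮 M hm R B hd hu hcut hcard x0 hx0 h
    · refine forward_aux X 𝒮 q hq hX h𝒮 M hm B R hd.symm ?_ ?_ hcard x0 hx0 h
      · rw [Set.union_comm]; exact hu
      · exact fun u v hadj => (hcut u v hadj).trans or_comm
  · rintro ⟨𝒞, h1, h2, h3⟩
    exact backward_aux X 𝒮 q hq hX h𝒮 𝒞 h1 h2 h3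
end

section
/- Let G be a connected graph with at least two vertices that has a dominating vertex, i.e., a vertex adjacent to all other vertices of G. Then G has a matching cut if and only if G has a vertex of degree 1. -/
lemma aux9 {V : Type*} (G : SimpleGraph V) (u : V) (hu : ∀ v : V, v ≠ u → G.Adj u v)
    (M : Set (Sym2 V)) (hMmatch : ∀ e ∈ M, ∀ f ∈ M, ∀ v : V, v ∈ e → v ∈ f → e = f)
    (R B : Set V) (hB : B.Nonempty) (hdisj : Disjoint R B) (hunion : R ∪ B = Set.univ)
    (hcut : ∀ a b : V, G.Adj a b → (s(a, b) ∈ M ↔ ((a ∈ R ∧ b ∈ B) ∨ (a ∈ B ∧ b ∈ R))))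
    (huR : u ∈ R) : ∃ v : V, {w | G.Adj v w} = {u} := by
  obtain ⟨b, hb⟩ := hB
  have hbu : b ≠ u := fun h => hdisj.ne_of_mem huR hb h.symm
  have hub : G.Adj u b := hu b hbu
  have hMub : s(u, b) ∈ M := (hcut u b hub).2 (Or.inl ⟨huR, hb⟩)
  have hBsing : ∀ b' ∈ B, b' = b := by
    intro b' hb'
    have hb'u : b' ≠ u := fun h => hdisj.ne_of_mem huR hb' h.symm
    have h1 : s(u, b') ∈ M := (hcut u b' (hu b' hb'u)).2 (Or.inl ⟨huR, hb'⟩)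
    have := hMmatch _ h1 _ hMub u (Sym2.mem_mk_left u b') (Sym2.mem_mk_left u b)
    rcases Sym2.eq_iff.1 this with ⟨_, h⟩ | ⟨h, _⟩
    · exact h
    · exact absurd h.symm hbu
  refine ⟨b, Set.eq_singleton_iff_unique_mem.2 ⟨hub.symm, ?_⟩⟩
  intro w hw
  have hadj : G.Adj b w := hw
  have hwb : w ≠ b := hadj.ne'
  have hwR : w ∈ R := by
    have : w ∈ R ∪ B := hunion ▸ Set.mem_univ w
    rcases this with h | h
    · exact h
    · exact absurd (hBsing w h) hwb
  have h1 : s(b, w) ∈ M := (hcut b w hadj).2 (Or.inr ⟨hb, hwR⟩)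
  have := hMmatch _ h1 _ hMub b (Sym2.mem_mk_left b w) (Sym2.mem_mk_right u b)
  rcases Sym2.eq_iff.1 this with ⟨h, _⟩ | ⟨_, h⟩
  · exact absurd h hbu
  · exact h

open Paper in
theorem statement9 {V : Type*} [Fintype V] (G : SimpleGraph V) (hG : G.Connected)
    (h2 : 2 ≤ Fintype.card V)
    (hdom : ∃ u : V, ∀ v : V, v ≠ u → G.Adj u v) :
    (∃ M : Set (Sym2 V), IsMatchingCut G M) ↔
    (∃ v : V, {w | G.Adj v w}.ncard = 1) := by
  obtain ⟨u, hu⟩ := hdom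
  constructor
  · rintro ⟨M, ⟨hMsub, hMmatch⟩, R, B, hR, hB, hdisj, hunion, hcut⟩
    have huRB : u ∈ R ∪ B := hunion ▸ Set.mem_univ u
    have key : ∃ v : V, {w | G.Adj v w} = {u} := by
      rcases huRB with h | h
      · exact aux9 G u hu M hMmatch R B hB hdisj hunion hcut h
      · refine aux9 G u hu M hMmatch B R hR hdisj.symm ?_ ?_ h
        · rw [Set.union_comm]; exact hunion
        · intro a b hab
          rw [hcut a b hab]; tauto
    obtain ⟨v, hv⟩ := key
    exact ⟨v, by rw [hv, Set.ncard_singleton]⟩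
  · rintro ⟨v, hv⟩
    obtain ⟨w, hw⟩ := Set.ncard_eq_one.1 hv
    have hadj : G.Adj v w := by
      have : w ∈ {w | G.Adj v w} := hw ▸ Set.mem_singleton w
      exact this
    have hnbr : ∀ x : V, G.Adj v x → x = w := by
      intro x hx
      have : x ∈ ({w} : Set V) := hw ▸ hx
      exact this
    refine ⟨{s(v, w)}, ⟨⟨?_, ?_⟩, {v}, {v}ᶜ, ⟨v, rfl⟩, ?_, ?_, Set.union_compl_self _, ?_⟩⟩
    · intro e he
      rw [Set.mem_singleton_iff] at he
      rw [he, SimpleGraph.mem_edgeSet]; exact hadj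
    · intro e he f hf _ _ _
      rw [Set.mem_singleton_iff] at he hf
      rw [he, hf]
    · obtain ⟨x, hx⟩ := Fintype.exists_ne_of_one_lt_card (by omega) v
      exact ⟨x, hx⟩
    · exact Set.disjoint_compl_right_iff_subset.2 (le_refl _)
    · intro a b hab
      simp only [Set.mem_singleton_iff, Set.mem_compl_iff]
      constructor
      · intro heq
        rcases Sym2.eq_iff.1 heq with ⟨ha, hb⟩ | ⟨ha, hb⟩
        · exact Or.inl ⟨ha, hb ▸ hadj.ne'⟩
        · exact Or.inr ⟨ha ▸ hadj.ne', hb⟩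
      · rintro (⟨ha, hb⟩ | ⟨ha, hb⟩)
        · subst ha
          rw [hnbr b hab]
        · subst hb
          rw [hnbr a hab.symm, Sym2.eq_swap]
end

section
/- Let G be a connected graph with at least two vertices that has a dominating vertex, i.e., a vertex adjacent to all other vertices of G. Then G has a perfect matching containing a matching cut if and only if G has a perfect matching and G has a vertex of degree 1. -/
open Paper in
theorem statement10 {V : Type*} [Fintype V] (G : SimpleGraph V) (hG : G.Connected)
    (h2 : 2 ≤ Fintype.card V)
    (hdom : ∃ u : V, ∀ v : V, v ≠ u → G.Adj u v) :
    (∃ P M : Set (Sym2 V), IsPerfectMatching G P ∧ M ⊆ P ∧ IsMatchingCut G M) ↔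
    ((∃ P : Set (Sym2 V), IsPerfectMatching G P) ∧ (∃ v : V, {w | G.Adj v w}.ncard = 1)) := by
  obtain ⟨u, hu⟩ := hdom
  constructor
  · rintro ⟨P, M, hP, hMP, hM, R, B, hR, hB, hdisj, hun, hcut⟩
    refine ⟨⟨P, hP⟩, ?_⟩
    have key : ∀ R B : Set V, B.Nonempty → Disjoint R B → R ∪ B = Set.univ →
        (∀ a b : V, G.Adj a b → (s(a, b) ∈ M ↔ ((a ∈ R ∧ b ∈ B) ∨ (a ∈ B ∧ b ∈ R)))) →
        u ∈ R → ∃ v : V, {w | G.Adj v w}.ncard = 1 := by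
      intro R B hB hdisj hun hcut huR
      obtain ⟨b, hbB⟩ := hB
      have hbu : b ≠ u := fun h => hdisj.ne_of_mem huR hbB h.symm
      have hadj : G.Adj u b := hu b hbu
      have hub : s(u, b) ∈ M := (hcut u b hadj).2 (Or.inl ⟨huR, hbB⟩)
      refine ⟨b, ?_⟩
      have : {w | G.Adj b w} = {u} := by
        ext w
        simp only [Set.mem_setOf_eq, Set.mem_singleton_iff]
        constructor
        · intro hbw
          have hwRB : w ∈ R ∨ w ∈ B := by
            have := Set.mem_univ w; rw [← hun] at this; exact this
          rcases hwRB with hwR | hwB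
          · have hbwM : s(b, w) ∈ M := (hcut b w hbw).2 (Or.inr ⟨hbB, hwR⟩)
            have heq := hM.2 _ hbwM _ hub b (by simp) (by simp)
            rw [Sym2.eq_iff] at heq
            rcases heq with ⟨h1, _⟩ | ⟨_, h2⟩
            · exact absurd h1 hbu
            · exact h2
          · exfalso
            have hwu : w ≠ u := fun h => hdisj.ne_of_mem huR hwB h.symm
            have hadjw : G.Adj u w := hu w hwu
            have huwM : s(u, w) ∈ M := (hcut u w hadjw).2 (Or.inl ⟨huR, hwB⟩)
            have heq := hM.2 _ huwM _ hub u (by simp) (by simp)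
            rw [Sym2.eq_iff] at heq
            have hwb : w = b := by
              rcases heq with ⟨_, h2⟩ | ⟨h1, _⟩
              · exact h2
              · exact absurd h1.symm hbu
            exact G.loopless.irrefl b (hwb ▸ hbw)
        · rintro rfl
          exact hadj.symm
      rw [this, Set.ncard_singleton]
    have huRB : u ∈ R ∨ u ∈ B := by
      have := Set.mem_univ u; rw [← hun] at this; exact this
    rcases huRB with huR | huB
    · exact key R B hB hdisj hun hcut huR
    · refine key B R hR hdisj.symm (by rw [Set.union_comm]; exact hun) ?_ huB
      intro a b hab
      rw [hcut a b hab]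
      tauto
  · rintro ⟨⟨P, hP⟩, ⟨v, hv⟩⟩
    obtain ⟨w, hw⟩ := Set.ncard_eq_one.mp hv
    have hadj : G.Adj v w := by
      have : w ∈ {w' | G.Adj v w'} := hw ▸ rfl
      exact this
    have hvwP : s(v, w) ∈ P := by
      obtain ⟨e, heP, hve⟩ := hP.2 v
      obtain ⟨x, rfl⟩ := Sym2.mem_iff_exists.mp hve
      have hadjx : G.Adj v x := (G.mem_edgeSet).mp (hP.1.1 heP)
      have : x ∈ {w' | G.Adj v w'} := hadjx
      rw [hw, Set.mem_singleton_iff] at this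
      rwa [this] at heP
    refine ⟨P, {s(v, w)}, hP, by simp [hvwP], ?_⟩
    constructor
    · constructor
      · intro e he
        rw [Set.mem_singleton_iff] at he
        rw [he, G.mem_edgeSet]
        exact hadj
      · intro e he f hf x _ _
        rw [Set.mem_singleton_iff] at he hf
        rw [he, hf]
    · refine ⟨{v}, {v}ᶜ, ⟨v, rfl⟩, ?_, disjoint_compl_right, Set.union_compl_self _, ?_⟩
      · obtain ⟨y, hy⟩ := Fintype.exists_ne_of_one_lt_card h2 v
        exact ⟨y, hy⟩
      · intro a b hab
        simp only [Set.mem_singleton_iff, Set.mem_compl_iff, Set.mem_setOf_eq]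
        constructor
        · intro h
          rw [Sym2.eq_iff] at h
          rcases h with ⟨rfl, rfl⟩ | ⟨rfl, rfl⟩
          · exact Or.inl ⟨rfl, hadj.ne'⟩
          · exact Or.inr ⟨hadj.ne', rfl⟩
        · rintro (⟨rfl, _⟩ | ⟨_, rfl⟩)
          · have : b ∈ {w' | G.Adj a w'} := hab
            rw [hw, Set.mem_singleton_iff] at this
            rw [this]
          · have : a ∈ {w' | G.Adj b w'} := hab.symm
            rw [hw, Set.mem_singleton_iff] at this
            rw [this, Sym2.eq_swap]
end

section
/- Let X be a finite set with |X| = 4q for some integer q ≥ 1 and let 𝒮 be a collection of 4-element subsets of X. Then the graph G₄(X,𝒮) has a perfect matching containing a matching cut with at least 4q edges if and only if 𝒮 contains a subcollection of pairwise disjoint sets whose union is X. -/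
namespace Paper
variable {α : Type*} [DecidableEq α]

lemma four_set_pairing (S : Finset α) (hS : S.card = 4) :
    ∃ f : α → α, ∀ x ∈ S, f x ∈ S ∧ f x ≠ x ∧ f (f x) = x := by
  obtain ⟨a, ha⟩ : S.Nonempty := Finset.card_pos.mp (by omega)
  have h3 : (S.erase a).card = 3 := by rw [Finset.card_erase_of_mem ha, hS]
  obtain ⟨b, c, d, hbc, hbd, hcd, habcd⟩ := Finset.card_eq_three.mp h3
  have hb : b ∈ S.erase a := by rw [habcd]; simp
  have hc : c ∈ S.erase a := by rw [habcd]; simp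
  have hd : d ∈ S.erase a := by rw [habcd]; simp
  have hab : a ≠ b := fun h => (Finset.mem_erase.mp hb).1 h.symm
  have hac : a ≠ c := fun h => (Finset.mem_erase.mp hc).1 h.symm
  have had : a ≠ d := fun h => (Finset.mem_erase.mp hd).1 h.symm
  have hbS := Finset.mem_of_mem_erase hb
  have hcS := Finset.mem_of_mem_erase hc
  have hdS := Finset.mem_of_mem_erase hd
  refine ⟨fun x => if x = a then b else if x = b then a else
      if x = c then d else if x = d then c else x, ?_⟩
  intro x hx
  have hxcases : x = a ∨ x = b ∨ x = c ∨ x = d := by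
    by_contra hcon
    push_neg at hcon
    have : x ∈ S.erase a := Finset.mem_erase.mpr ⟨hcon.1, hx⟩
    rw [habcd] at this
    simp only [Finset.mem_insert, Finset.mem_singleton] at this
    tauto
  rcases hxcases with rfl | rfl | rfl | rfl
  · simp [hab, hab.symm, ha, hbS]
  · simp [hab.symm, hbS, ha, hab]
  · simp [hac.symm, hbc.symm, hcd, hcS, hdS, had.symm, hbd.symm, hcd.symm]
  · simp [had.symm, hbd.symm, hcd.symm, hdS, hcS, hac.symm, hbc.symm, hcd]

instance coverVertexFinite (X : Finset α) (𝒮 : Finset (Finset α)) :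
    Finite (CoverVertex X 𝒮) := by
  have h : {p : Finset α × α | p.1 ∈ 𝒮 ∧ p.2 ∈ p.1}.Finite := by
    apply Set.Finite.subset (𝒮 ×ˢ 𝒮.biUnion id).finite_toSet
    intro p hp
    simp only [Finset.coe_product, Set.mem_prod, Finset.mem_coe, Finset.mem_biUnion, id]
    exact ⟨hp.1, ⟨p.1, hp.1, hp.2⟩⟩
  have h2 : Finite {p : Finset α × α // p.1 ∈ 𝒮 ∧ p.2 ∈ p.1} := h.to_subtype
  have h1 : Finite {x : α // x ∈ X} := (X.finite_toSet).to_subtype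
  unfold CoverVertex
  infer_instance

instance (X : Finset α) (𝒮 : Finset (Finset α)) : Finite (Sym2 (CoverVertex X 𝒮)) :=
  Finite.of_surjective (fun z : CoverVertex X 𝒮 × CoverVertex X 𝒮 => Sym2.mk z.1 z.2)
    (Quot.exists_rep)

end Paper

open Paper in
theorem statement13 {α : Type*} [DecidableEq α] (X : Finset α) (𝒮 : Finset (Finset α))
    (q : ℕ) (hq : 1 ≤ q) (hX : X.card = 4 * q)
    (h𝒮 : ∀ S ∈ 𝒮, S.card = 4 ∧ S ⊆ X) :
    (∃ P M : Set (Sym2 (CoverVertex X 𝒮)),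
      IsPerfectMatching (coverGraph X 𝒮) P ∧ M ⊆ P ∧
      IsMatchingCut (coverGraph X 𝒮) M ∧ 4 * q ≤ M.ncard) ↔
    (∃ 𝒞 : Finset (Finset α), 𝒞 ⊆ 𝒮 ∧
      (∀ S ∈ 𝒞, ∀ T ∈ 𝒞, S ≠ T → Disjoint S T) ∧ 𝒞.biUnion id = X) := by
  classical
  have hXpos : 0 < X.card := by omega
  constructor
  · rintro ⟨P, M, hPperf, hMP, ⟨hMmatch, R, B, hRne, hBne, hdisj, hunion, hiff⟩, hcard⟩
    obtain ⟨x0, hx0⟩ := Finset.card_pos.mp hXpos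
    have inl_ne : ∀ (a b : {x : α // x ∈ X}), (a : α) ≠ (b : α) →
        (Sum.inl a : CoverVertex X 𝒮) ≠ Sum.inl b :=
      fun a b h hh => h (congrArg Subtype.val (Sum.inl.inj hh))
    -- no vertex has two cross neighbours (parametric in the partition)
    have no2 : ∀ (R' B' : Set (CoverVertex X 𝒮)),
        (∀ u v, (coverGraph X 𝒮).Adj u v →
          (s(u, v) ∈ M ↔ ((u ∈ R' ∧ v ∈ B') ∨ (u ∈ B' ∧ v ∈ R')))) →
        ∀ u v w, (coverGraph X 𝒮).Adj u v → (coverGraph X 𝒮).Adj u w → v ≠ w →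
          ((u ∈ R' ∧ v ∈ B') ∨ (u ∈ B' ∧ v ∈ R')) →
          ((u ∈ R' ∧ w ∈ B') ∨ (u ∈ B' ∧ w ∈ R')) → False := by
      intro R' B' hiff' u v w huv huw hvw h1 h2
      have e1 : s(u, v) ∈ M := (hiff' u v huv).mpr h1
      have e2 : s(u, w) ∈ M := (hiff' u w huw).mpr h2
      have heq := hMmatch.2 _ e1 _ e2 u (by simp) (by simp)
      erw [Sym2.eq_iff] at heq
      rcases heq with ⟨-, h⟩ | ⟨-, h'⟩
      · exact hvw h
      · exact (coverGraph X 𝒮).ne_of_adj huv h'.symm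
    -- the X-clique lies on one side (parametric)
    have uniform : ∀ (R' B' : Set (CoverVertex X 𝒮)),
        (∀ u v, (coverGraph X 𝒮).Adj u v →
          (s(u, v) ∈ M ↔ ((u ∈ R' ∧ v ∈ B') ∨ (u ∈ B' ∧ v ∈ R')))) →
        (∀ v, v ∈ R' ∨ v ∈ B') →
        Sum.inl ⟨x0, hx0⟩ ∈ R' → ∀ y : {x : α // x ∈ X}, Sum.inl y ∈ R' := by
      intro R' B' hiff' hside' h0 y
      by_contra hyR
      have hyB : Sum.inl y ∈ B' := (hside' _).resolve_left hyR
      have hyx0 : (y : α) ≠ x0 := by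
        intro h
        have heq : Sum.inl y = (Sum.inl ⟨x0, hx0⟩ : CoverVertex X 𝒮) :=
          congrArg Sum.inl (Subtype.ext h)
        exact hyR (heq ▸ h0)
      have hz : ((X.erase x0).erase (y : α)).Nonempty := by
        rw [← Finset.card_pos]
        have h1 := Finset.pred_card_le_card_erase (s := X.erase x0) (a := (y : α))
        have h2 := Finset.pred_card_le_card_erase (s := X) (a := x0)
        omega
      obtain ⟨z, hz⟩ := hz
      have hzy : z ≠ (y : α) := (Finset.mem_erase.mp hz).1
      have hzx0 : z ≠ x0 := (Finset.mem_erase.mp (Finset.mem_of_mem_erase hz)).1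
      have hzX : z ∈ X := Finset.mem_of_mem_erase (Finset.mem_of_mem_erase hz)
      rcases hside' (Sum.inl ⟨z, hzX⟩) with hw | hw
      · -- z on side R' : y has two cross neighbours x0 and z
        exact no2 R' B' hiff' (Sum.inl y) (Sum.inl ⟨x0, hx0⟩) (Sum.inl ⟨z, hzX⟩)
          hyx0 (Ne.symm hzy) (inl_ne _ _ (Ne.symm hzx0))
          (Or.inr ⟨hyB, h0⟩) (Or.inr ⟨hyB, hw⟩)
      · -- z on side B' : x0 has two cross neighbours y and z
        exact no2 R' B' hiff' (Sum.inl ⟨x0, hx0⟩) (Sum.inl y) (Sum.inl ⟨z, hzX⟩)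
          (Ne.symm hyx0) (Ne.symm hzx0) (inl_ne _ _ (Ne.symm hzy))
          (Or.inl ⟨h0, hyB⟩) (Or.inl ⟨h0, hw⟩)
    -- the core argument, assuming all of X lies in R'
    have core : ∀ (R' B' : Set (CoverVertex X 𝒮)),
        Disjoint R' B' → R' ∪ B' = Set.univ →
        (∀ u v, (coverGraph X 𝒮).Adj u v →
          (s(u, v) ∈ M ↔ ((u ∈ R' ∧ v ∈ B') ∨ (u ∈ B' ∧ v ∈ R')))) →
        (∀ y : {x : α // x ∈ X}, Sum.inl y ∈ R') →
        ∃ 𝒞 : Finset (Finset α), 𝒞 ⊆ 𝒮 ∧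
          (∀ S ∈ 𝒞, ∀ T ∈ 𝒞, S ≠ T → Disjoint S T) ∧ 𝒞.biUnion id = X := by
      intro R' B' hdisj' hunion' hiff' hinl
      have hside' : ∀ v : CoverVertex X 𝒮, v ∈ R' ∨ v ∈ B' := by
        intro v
        have hv : v ∈ R' ∪ B' := by rw [hunion']; trivial
        exact hv
      have hnotboth' : ∀ v, v ∈ R' → v ∈ B' → False := fun v h1 h2 =>
        Set.disjoint_left.mp hdisj' h1 h2
      -- gadget cliques are monochromatic
      have gadget : ∀ p r : {p : Finset α × α // p.1 ∈ 𝒮 ∧ p.2 ∈ p.1},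
          p.1.1 = r.1.1 → Sum.inr p ∈ B' → Sum.inr r ∈ B' := by
        intro p r hpr hpB
        by_contra hrB
        have hrR : Sum.inr r ∈ R' := (hside' _).resolve_right hrB
        have hpB' : ¬ Sum.inr p ∈ R' := fun h => hnotboth' _ h hpB
        have hpr2 : p.1.2 ≠ r.1.2 := by
          intro h
          have : p = r := Subtype.ext (Prod.ext hpr h)
          exact hrB (this ▸ hpB)
        have hS4 : p.1.1.card = 4 := (h𝒮 _ p.2.1).1
        have hr1 : r.1.2 ∈ p.1.1 := by rw [hpr]; exact r.2.2
        have hz : ((p.1.1.erase p.1.2).erase r.1.2).Nonempty := by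
          rw [← Finset.card_pos]
          have h1 := Finset.pred_card_le_card_erase (s := p.1.1.erase p.1.2) (a := r.1.2)
          have h2 := Finset.pred_card_le_card_erase (s := p.1.1) (a := p.1.2)
          omega
        obtain ⟨z, hz⟩ := hz
        have hzr : z ≠ r.1.2 := (Finset.mem_erase.mp hz).1
        have hzp : z ≠ p.1.2 := (Finset.mem_erase.mp (Finset.mem_of_mem_erase hz)).1
        have hzS : z ∈ p.1.1 := Finset.mem_of_mem_erase (Finset.mem_of_mem_erase hz)
        set w : {p : Finset α × α // p.1 ∈ 𝒮 ∧ p.2 ∈ p.1} := ⟨(p.1.1, z), p.2.1, hzS⟩ with hwdef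
        have hwp : (Sum.inr w : CoverVertex X 𝒮) ≠ Sum.inr p := by
          intro h
          exact hzp (congrArg (fun t => (Subtype.val t).2) (Sum.inr.inj h))
        have hwr : (Sum.inr w : CoverVertex X 𝒮) ≠ Sum.inr r := by
          intro h
          exact hzr (congrArg (fun t => (Subtype.val t).2) (Sum.inr.inj h))
        rcases hside' (Sum.inr w) with hwR | hwB
        · -- w ∈ R' : p has two cross neighbours r and w
          exact no2 R' B' hiff' (Sum.inr p) (Sum.inr r) (Sum.inr w)
            ⟨hpr, hpr2⟩ ⟨rfl, Ne.symm hzp⟩ (fun h => hwr h.symm)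
            (Or.inr ⟨hpB, hrR⟩) (Or.inr ⟨hpB, hwR⟩)
        · -- w ∈ B' : r has two cross neighbours p and w
          have hrp2 : r.1.2 ≠ p.1.2 := Ne.symm hpr2
          exact no2 R' B' hiff' (Sum.inr r) (Sum.inr p) (Sum.inr w)
            ⟨hpr.symm, hrp2⟩ ⟨hpr.symm, Ne.symm hzr⟩ (fun h => hwp h.symm)
            (Or.inl ⟨hrR, hpB⟩) (Or.inl ⟨hrR, hwB⟩)
      -- the candidate cover
      set 𝒞 : Finset (Finset α) := 𝒮.filter (fun S =>
        ∃ p : {p : Finset α × α // p.1 ∈ 𝒮 ∧ p.2 ∈ p.1},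
          p.1.1 = S ∧ Sum.inr p ∈ B') with h𝒞def
      have h𝒞mem : ∀ p : {p : Finset α × α // p.1 ∈ 𝒮 ∧ p.2 ∈ p.1},
          Sum.inr p ∈ B' → p.1.1 ∈ 𝒞 :=
        fun p hp => Finset.mem_filter.mpr ⟨p.2.1, p, rfl, hp⟩
      have h𝒞B : ∀ p : {p : Finset α × α // p.1 ∈ 𝒮 ∧ p.2 ∈ p.1},
          p.1.1 ∈ 𝒞 → Sum.inr p ∈ B' := by
        intro p hp
        obtain ⟨-, r, hr1, hr2⟩ := Finset.mem_filter.mp hp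
        exact gadget r p hr1 hr2
      -- the shape of edges of M
      have hshape : ∀ e ∈ M, ∃ a, ∃ ha : a ∈ X,
          ∃ p : {p : Finset α × α // p.1 ∈ 𝒮 ∧ p.2 ∈ p.1},
          p.1.1 ∈ 𝒞 ∧ p.1.2 = a ∧ e = s(Sum.inl ⟨a, ha⟩, Sum.inr p) := by
        intro e
        induction e using Sym2.ind with
        | _ u v =>
          intro he
          have hadj : (coverGraph X 𝒮).Adj u v := hMmatch.1 he
          have hcr := (hiff' u v hadj).mp he
          rcases u with x | p <;> rcases v with y | p'
          · exfalso
            rcases hcr with ⟨-, h⟩ | ⟨h, -⟩ <;> exact hnotboth' _ (hinl _) h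
          · have hadj' : (x : α) = p'.1.2 := hadj
            have hpB : Sum.inr p' ∈ B' := by
              rcases hcr with ⟨-, h⟩ | ⟨h, -⟩
              · exact h
              · exact absurd h (fun h => hnotboth' _ (hinl x) h)
            refine ⟨p'.1.2, (h𝒮 _ p'.2.1).2 p'.2.2, p', h𝒞mem p' hpB, rfl, ?_⟩
            have heq : Sum.inl x = (Sum.inl ⟨p'.1.2, (h𝒮 _ p'.2.1).2 p'.2.2⟩ :
                CoverVertex X 𝒮) := congrArg Sum.inl (Subtype.ext hadj')
            rw [heq]
            rfl
          · have hadj' : (y : α) = p.1.2 := hadj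
            have hpB : Sum.inr p ∈ B' := by
              rcases hcr with ⟨-, h⟩ | ⟨h, -⟩
              · exact absurd h (fun h => hnotboth' _ (hinl y) h)
              · exact h
            refine ⟨p.1.2, (h𝒮 _ p.2.1).2 p.2.2, p, h𝒞mem p hpB, rfl, ?_⟩
            have heq : Sum.inl y = (Sum.inl ⟨p.1.2, (h𝒮 _ p.2.1).2 p.2.2⟩ :
                CoverVertex X 𝒮) := congrArg Sum.inl (Subtype.ext hadj')
            rw [Sym2.eq_swap, heq]
            rfl
          · exfalso
            have h11 : p.1.1 = p'.1.1 := hadj.1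
            rcases hcr with ⟨hpR, hp'B⟩ | ⟨hpB, hp'R⟩
            · exact hnotboth' _ hpR (gadget p' p h11.symm hp'B)
            · exact hnotboth' _ hp'R (gadget p p' h11 hpB)
      -- counting : M injects into the union of 𝒞
      have hcount : M.ncard ≤ (𝒞.biUnion id).card := by
        have hmain : M.ncard ≤ ((𝒞.biUnion id : Finset α) : Set α).ncard := by
          apply Set.ncard_le_ncard_of_injOn
            (fun e => if h : ∃ a, ∃ ha : a ∈ X,
              ∃ p : {p : Finset α × α // p.1 ∈ 𝒮 ∧ p.2 ∈ p.1},
              p.1.2 = a ∧ e = s(Sum.inl ⟨a, ha⟩, Sum.inr p) then h.choose else x0)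
          · intro e he
            obtain ⟨a, ha, p, hpC, hpa, hee⟩ := hshape e he
            have hex : ∃ a, ∃ ha : a ∈ X,
                ∃ p : {p : Finset α × α // p.1 ∈ 𝒮 ∧ p.2 ∈ p.1},
                p.1.2 = a ∧ e = s(Sum.inl ⟨a, ha⟩, Sum.inr p) := ⟨a, ha, p, hpa, hee⟩
            simp only [dif_pos hex]
            obtain ⟨ha', p', hp'a, hee'⟩ := hex.choose_spec
            have hcomb := hee.symm.trans hee'
            erw [Sym2.eq_iff] at hcomb
            rcases hcomb with ⟨h1, h2⟩ | ⟨h1, -⟩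
            · have hval : a = hex.choose := congrArg Subtype.val (Sum.inl.inj h1)
              rw [← hval]
              simp only [Finset.coe_biUnion, Set.mem_iUnion, Finset.mem_coe, id]
              exact ⟨p.1.1, hpC, hpa ▸ p.2.2⟩
            · exact absurd h1 (by simp)
          · intro e he e' he' hfe
            simp only at hfe
            obtain ⟨a, ha, p, hpC, hpa, hee⟩ := hshape e he
            obtain ⟨a', ha', p', hpC', hpa', hee'⟩ := hshape e' he'
            have hex : ∃ b, ∃ hb : b ∈ X,
                ∃ r : {p : Finset α × α // p.1 ∈ 𝒮 ∧ p.2 ∈ p.1},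
                r.1.2 = b ∧ e = s(Sum.inl ⟨b, hb⟩, Sum.inr r) := ⟨a, ha, p, hpa, hee⟩
            have hex' : ∃ b, ∃ hb : b ∈ X,
                ∃ r : {p : Finset α × α // p.1 ∈ 𝒮 ∧ p.2 ∈ p.1},
                r.1.2 = b ∧ e' = s(Sum.inl ⟨b, hb⟩, Sum.inr r) := ⟨a', ha', p', hpa', hee'⟩
            rw [dif_pos hex, dif_pos hex'] at hfe
            -- identify the chosen values with a, a'
            obtain ⟨hb, r, hrb, her⟩ := hex.choose_spec
            obtain ⟨hb', r', hrb', her'⟩ := hex'.choose_spec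
            have h1 : a = hex.choose := by
              have hcomb := hee.symm.trans her
              erw [Sym2.eq_iff] at hcomb
              rcases hcomb with ⟨h1, -⟩ | ⟨h1, -⟩
              · exact congrArg Subtype.val (Sum.inl.inj h1)
              · exact absurd h1 (by simp)
            have h2 : a' = hex'.choose := by
              have hcomb := hee'.symm.trans her'
              erw [Sym2.eq_iff] at hcomb
              rcases hcomb with ⟨h1, -⟩ | ⟨h1, -⟩
              · exact congrArg Subtype.val (Sum.inl.inj h1)
              · exact absurd h1 (by simp)
            have haa : a = a' := by rw [h1, h2, hfe]
            have hv : (Sum.inl ⟨a, ha⟩ : CoverVertex X 𝒮) ∈ e := by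
              rw [hee]; simp
            have hv' : (Sum.inl ⟨a, ha⟩ : CoverVertex X 𝒮) ∈ e' := by
              rw [hee']
              have : (Sum.inl ⟨a, ha⟩ : CoverVertex X 𝒮) = Sum.inl ⟨a', ha'⟩ :=
                congrArg Sum.inl (Subtype.ext haa)
              rw [this]
              simp
            exact hMmatch.2 e he e' he' _ hv hv'
        rwa [Set.ncard_coe_finset] at hmain
      have hBle : 4 * q ≤ (𝒞.biUnion id).card := le_trans hcard hcount
      have hsub : 𝒞.biUnion id ⊆ X := by
        intro a ha
        obtain ⟨S, hS, haS⟩ := Finset.mem_biUnion.mp ha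
        exact (h𝒮 S (Finset.mem_of_mem_filter S hS)).2 haS
      refine ⟨𝒞, Finset.filter_subset _ _, ?_,
        Finset.eq_of_subset_of_card_le hsub (by omega)⟩
      intro S hS T hT hST
      rw [Finset.disjoint_left]
      intro a haS haT
      have hS𝒮 : S ∈ 𝒮 := Finset.mem_of_mem_filter S hS
      have hT𝒮 : T ∈ 𝒮 := Finset.mem_of_mem_filter T hT
      have haX : a ∈ X := (h𝒮 S hS𝒮).2 haS
      have hSB : Sum.inr (⟨(S, a), hS𝒮, haS⟩ :
          {p : Finset α × α // p.1 ∈ 𝒮 ∧ p.2 ∈ p.1}) ∈ B' := h𝒞B _ hS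
      have hTB : Sum.inr (⟨(T, a), hT𝒮, haT⟩ :
          {p : Finset α × α // p.1 ∈ 𝒮 ∧ p.2 ∈ p.1}) ∈ B' := h𝒞B _ hT
      refine no2 R' B' hiff' (Sum.inl ⟨a, haX⟩)
        (Sum.inr ⟨(S, a), hS𝒮, haS⟩) (Sum.inr ⟨(T, a), hT𝒮, haT⟩)
        rfl rfl ?_ (Or.inl ⟨hinl _, hSB⟩) (Or.inl ⟨hinl _, hTB⟩)
      intro h
      exact hST (congrArg (fun t => (Subtype.val t).1) (Sum.inr.inj h))
    -- apply the core to the correct side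
    rcases (by rw [hunion]; trivial : Sum.inl ⟨x0, hx0⟩ ∈ R ∪ B) with h0 | h0
    · exact core R B hdisj hunion hiff
        (uniform R B hiff (fun v => by rw [← Set.mem_union, hunion]; trivial) h0)
    · have hiff2 : ∀ u v, (coverGraph X 𝒮).Adj u v →
          (s(u, v) ∈ M ↔ ((u ∈ B ∧ v ∈ R) ∨ (u ∈ R ∧ v ∈ B))) :=
        fun u v h => (hiff u v h).trans or_comm
      exact core B R hdisj.symm (by rw [Set.union_comm]; exact hunion) hiff2
        (uniform B R hiff2 (fun v => Or.symm (by rw [← Set.mem_union, hunion]; trivial)) h0)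
  · rintro ⟨𝒞, h𝒞𝒮, hpair, hcover⟩
    have hmemX : ∀ p : {p : Finset α × α // p.1 ∈ 𝒮 ∧ p.2 ∈ p.1}, p.1.2 ∈ X :=
      fun p => (h𝒮 _ p.2.1).2 p.2.2
    have hfex : ∀ S ∈ 𝒮, ∃ f : α → α, ∀ x ∈ S, f x ∈ S ∧ f x ≠ x ∧ f (f x) = x :=
      fun S hS => four_set_pairing S (h𝒮 S hS).1
    choose f hf using hfex
    set prt : {p : Finset α × α // p.1 ∈ 𝒮 ∧ p.2 ∈ p.1} →
        {p : Finset α × α // p.1 ∈ 𝒮 ∧ p.2 ∈ p.1} :=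
      fun p => ⟨(p.1.1, f p.1.1 p.2.1 p.1.2), p.2.1, (hf p.1.1 p.2.1 p.1.2 p.2.2).1⟩
      with hprt
    have hp1 : ∀ p, (prt p).1.1 = p.1.1 := fun p => rfl
    have hp2 : ∀ p, (prt p).1.2 ≠ p.1.2 := fun p => (hf p.1.1 p.2.1 p.1.2 p.2.2).2.1
    have hp3 : ∀ p, prt (prt p) = p := by
      intro p
      apply Subtype.ext
      refine Prod.ext ((hp1 _).trans (hp1 _)) ?_
      show ((prt (prt p)) : Finset α × α).2 = (p : Finset α × α).2
      simp only [hprt]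
      exact (hf p.1.1 p.2.1 p.1.2 p.2.2).2.2
    -- the unique covering set of each x ∈ X
    have hcovex : ∀ x : {x : α // x ∈ X}, ∃ S, S ∈ 𝒞 ∧ (x : α) ∈ S := by
      intro x
      have hx : (x : α) ∈ 𝒞.biUnion id := by rw [hcover]; exact x.2
      obtain ⟨S, hS, hxS⟩ := Finset.mem_biUnion.mp hx
      exact ⟨S, hS, hxS⟩
    choose cov hcov1 hcov2 using hcovex
    have covuniq : ∀ (a : α), ∀ S ∈ 𝒞, ∀ T ∈ 𝒞, a ∈ S → a ∈ T → S = T := by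
      intro a S hS T hT haS haT
      by_contra hne
      exact Finset.disjoint_left.mp (hpair S hS T hT hne) haS haT
    -- gadget vertex covering x
    set pv : {x : α // x ∈ X} → {p : Finset α × α // p.1 ∈ 𝒮 ∧ p.2 ∈ p.1} :=
      fun x => ⟨(cov x, (x : α)), h𝒞𝒮 (hcov1 x), hcov2 x⟩ with hpv
    set M : Set (Sym2 (CoverVertex X 𝒮)) :=
      {e | ∃ p : {p : Finset α × α // p.1 ∈ 𝒮 ∧ p.2 ∈ p.1},
        p.1.1 ∈ 𝒞 ∧ e = s(Sum.inl ⟨p.1.2, hmemX p⟩, Sum.inr p)} with hM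
    set P : Set (Sym2 (CoverVertex X 𝒮)) :=
      M ∪ {e | ∃ p : {p : Finset α × α // p.1 ∈ 𝒮 ∧ p.2 ∈ p.1},
        p.1.1 ∉ 𝒞 ∧ e = s(Sum.inr p, Sum.inr (prt p))} with hP
    have hPedge : P ⊆ (coverGraph X 𝒮).edgeSet := by
      rintro e (⟨p, hp, rfl⟩ | ⟨p, hp, rfl⟩)
      · exact rfl
      · exact ⟨rfl, Ne.symm (hp2 p)⟩
    have hPmatch : IsMatching (coverGraph X 𝒮) P := by
      refine ⟨hPedge, ?_⟩
      rintro e (⟨p, hpC, rfl⟩ | ⟨p, hpC, rfl⟩) e' (⟨p', hpC', rfl⟩ | ⟨p', hpC', rfl⟩) v hv hv' <;>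
        erw [Sym2.mem_iff] at hv hv'
      · -- both in M
        rcases hv with rfl | rfl <;> rcases hv' with h | h
        · -- inl = inl : same element
          have hee : p.1.2 = p'.1.2 := congrArg Subtype.val (Sum.inl.inj h)
          have hSS : p.1.1 = p'.1.1 :=
            covuniq p.1.2 p.1.1 hpC p'.1.1 hpC' p.2.2 (hee ▸ p'.2.2)
          have : p = p' := Subtype.ext (Prod.ext hSS hee)
          rw [this]
        · exact absurd h (by simp)
        · exact absurd h.symm (by simp)
        · have : p = p' := Sum.inr.inj h
          rw [this]
      · -- e in M, e' in second part : gadget vertices of e' not in 𝒞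
        exfalso
        rcases hv with rfl | rfl <;> rcases hv' with h | h
        · exact absurd h (by simp)
        · exact absurd h (by simp)
        · exact hpC' (Sum.inr.inj h ▸ hpC)
        · have : p = prt p' := Sum.inr.inj h
          exact hpC' (by rw [← hp1 p', ← this]; exact hpC)
      · exfalso
        rcases hv' with rfl | rfl <;> rcases hv with h | h
        · exact absurd h (by simp)
        · exact absurd h (by simp)
        · exact hpC (Sum.inr.inj h ▸ hpC')
        · have : p' = prt p := Sum.inr.inj h
          exact hpC (by rw [← hp1 p, ← this]; exact hpC')
      · -- both in second part
        rcases hv with rfl | rfl <;> rcases hv' with h | h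
        · have : p = p' := Sum.inr.inj h
          rw [this]
        · -- p = prt p'
          have hpp : p = prt p' := Sum.inr.inj h
          rw [hpp, hp3 p', Sym2.eq_swap]
        · have hpp : prt p = p' := Sum.inr.inj h
          rw [← hpp, hp3 p, Sym2.eq_swap]
        · have hpp : prt p = prt p' := Sum.inr.inj h
          have : p = p' := by rw [← hp3 p, hpp, hp3 p']
          rw [this]
    have hMsub : M ⊆ P := Set.subset_union_left
    have hPperf : IsPerfectMatching (coverGraph X 𝒮) P := by
      refine ⟨hPmatch, ?_⟩
      rintro (x | p)
      · refine ⟨s(Sum.inl x, Sum.inr (pv x)), Or.inl ⟨pv x, hcov1 x, ?_⟩, Sym2.mem_mk_left _ _⟩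
        congr 1
      · by_cases hpC : p.1.1 ∈ 𝒞
        · exact ⟨s(Sum.inl ⟨p.1.2, hmemX p⟩, Sum.inr p), Or.inl ⟨p, hpC, rfl⟩, Sym2.mem_mk_right _ _⟩
        · exact ⟨s(Sum.inr p, Sum.inr (prt p)), Or.inr ⟨p, hpC, rfl⟩, Sym2.mem_mk_left _ _⟩
    -- the partition
    set B : Set (CoverVertex X 𝒮) :=
      {v | ∃ p : {p : Finset α × α // p.1 ∈ 𝒮 ∧ p.2 ∈ p.1},
        v = Sum.inr p ∧ p.1.1 ∈ 𝒞} with hB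
    have hMcut : IsMatchingCut (coverGraph X 𝒮) M := by
      refine ⟨⟨Set.Subset.trans hMsub hPedge,
        fun e he e' he' v hv hv' => hPmatch.2 e (hMsub he) e' (hMsub he') v hv hv'⟩,
        Bᶜ, B, ?_, ?_, disjoint_compl_left, Set.compl_union_self B, ?_⟩
      · obtain ⟨x0, hx0⟩ := Finset.card_pos.mp hXpos
        refine ⟨Sum.inl ⟨x0, hx0⟩, ?_⟩
        rintro ⟨p, hp, -⟩
        exact absurd hp (by simp)
      · obtain ⟨x0, hx0⟩ := Finset.card_pos.mp hXpos
        exact ⟨Sum.inr (pv ⟨x0, hx0⟩), pv ⟨x0, hx0⟩, rfl, hcov1 _⟩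
      · rintro (x | p) (y | p') hadj
        · constructor
          · rintro ⟨r, hr, heq⟩
            erw [Sym2.eq_iff] at heq
            rcases heq with ⟨h1, h2⟩ | ⟨h1, h2⟩
            · exact absurd h2 (by simp)
            · exact absurd h1 (by simp)
          · rintro (⟨-, ⟨r, hr, -⟩⟩ | ⟨⟨r, hr, -⟩, -⟩) <;> exact absurd hr (by simp)
        · -- inl x, inr p' ; hadj : x = p'.1.2
          have hadj' : (x : α) = p'.1.2 := hadj
          constructor
          · rintro ⟨r, hr, heq⟩
            erw [Sym2.eq_iff] at heq
            rcases heq with ⟨h1, h2⟩ | ⟨h1, h2⟩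
            · have : r = p' := Sum.inr.inj h2.symm
              exact Or.inl ⟨by rintro ⟨w, hw, -⟩; exact absurd hw (by simp),
                ⟨p', rfl, this ▸ hr⟩⟩
            · exact absurd h1 (by simp)
          · rintro (⟨-, ⟨r, hr, hrC⟩⟩ | ⟨⟨r, hr, -⟩, -⟩)
            · have hr' : p' = r := Sum.inr.inj hr
              refine ⟨p', hr' ▸ hrC, ?_⟩
              have : Sum.inl x = (Sum.inl ⟨p'.1.2, hmemX p'⟩ : CoverVertex X 𝒮) := by
                congr 1
                exact Subtype.ext hadj'
              rw [this]
              rfl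
            · exact absurd hr (by simp)
        · -- inr p, inl y
          have hadj' : (y : α) = p.1.2 := hadj
          erw [Sym2.eq_swap (a := Sum.inr p)]
          constructor
          · rintro ⟨r, hr, heq⟩
            erw [Sym2.eq_iff] at heq
            rcases heq with ⟨h1, h2⟩ | ⟨h1, h2⟩
            · have : r = p := Sum.inr.inj h2.symm
              exact Or.inr ⟨⟨p, rfl, this ▸ hr⟩,
                by rintro ⟨w, hw, -⟩; exact absurd hw (by simp)⟩
            · exact absurd h1 (by simp)
          · rintro (⟨-, ⟨r, hr, -⟩⟩ | ⟨⟨r, hr, hrC⟩, -⟩)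
            · exact absurd hr (by simp)
            · have hr' : p = r := Sum.inr.inj hr
              refine ⟨p, hr' ▸ hrC, ?_⟩
              have : Sum.inl y = (Sum.inl ⟨p.1.2, hmemX p⟩ : CoverVertex X 𝒮) := by
                congr 1
                exact Subtype.ext hadj'
              rw [this]
        · -- inr p, inr p'
          have hadj' : p.1.1 = p'.1.1 := hadj.1
          constructor
          · rintro ⟨r, hr, heq⟩
            erw [Sym2.eq_iff] at heq
            rcases heq with ⟨h1, -⟩ | ⟨-, h2⟩
            · exact absurd h1.symm (by simp)
            · exact absurd h2.symm (by simp)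
          · rintro (⟨hR, ⟨r, hr, hrC⟩⟩ | ⟨⟨r, hr, hrC⟩, hR⟩)
            · exact absurd ⟨p, rfl, by rw [hadj']; rw [← Sum.inr.inj hr] at hrC; exact hrC⟩ hR
            · exact absurd ⟨p', rfl, by rw [← hadj']; rw [← Sum.inr.inj hr] at hrC; exact hrC⟩ hR
    -- cardinality
    have hcard : 4 * q ≤ M.ncard := by
      set g : {x : α // x ∈ X} → Sym2 (CoverVertex X 𝒮) :=
        fun x => s(Sum.inl x, Sum.inr (pv x)) with hg
      have hginj : Function.Injective g := by
        intro x y hxy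
        rw [hg] at hxy
        erw [Sym2.eq_iff] at hxy
        rcases hxy with ⟨h1, -⟩ | ⟨h1, -⟩
        · exact Sum.inl.inj h1
        · exact absurd h1 (by simp)
      have hrange : Set.range g ⊆ M := by
        rintro e ⟨x, rfl⟩
        refine ⟨pv x, hcov1 x, ?_⟩
        congr 1
      have h1 : (Set.range g).ncard = X.card := by
        rw [← Nat.card_coe_set_eq, Nat.card_range_of_injective hginj,
          Nat.card_eq_fintype_card, Fintype.card_coe]
      calc 4 * q = X.card := hX.symm
        _ = (Set.range g).ncard := h1.symm
        _ ≤ M.ncard := Set.ncard_le_ncard hrange (Set.toFinite M)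
    exact ⟨P, M, hPperf, hMsub, hMcut, hcard⟩
end

section
/- Let G be a P_6-free graph with a valid red-blue colouring, and let A and B be disjoint non-empty subsets of the vertex set of G such that every vertex of A is adjacent to every vertex of B and every vertex of A ∪ B is coloured blue. Then there do not exist four distinct red vertices z₁, z₁', z₂, z₂' such that z₁z₁' and z₂z₂' are edges of G, no vertex of {z₁,z₁'} is adjacent to a vertex of {z₂,z₂'}, and each of z₁ and z₂ has a neighbour in A ∪ B. -/
namespace Paper

lemma buildP6 {V : Type*} (G : SimpleGraph V) (v0 v1 v2 v3 v4 v5 : V)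
    (d01 : v0 ≠ v1) (d02 : v0 ≠ v2) (d03 : v0 ≠ v3) (d04 : v0 ≠ v4) (d05 : v0 ≠ v5)
    (d12 : v1 ≠ v2) (d13 : v1 ≠ v3) (d14 : v1 ≠ v4) (d15 : v1 ≠ v5)
    (d23 : v2 ≠ v3) (d24 : v2 ≠ v4) (d25 : v2 ≠ v5)
    (d34 : v3 ≠ v4) (d35 : v3 ≠ v5) (d45 : v4 ≠ v5)
    (e01 : G.Adj v0 v1) (e12 : G.Adj v1 v2) (e23 : G.Adj v2 v3)
    (e34 : G.Adj v3 v4) (e45 : G.Adj v4 v5)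
    (n02 : ¬ G.Adj v0 v2) (n03 : ¬ G.Adj v0 v3) (n04 : ¬ G.Adj v0 v4) (n05 : ¬ G.Adj v0 v5)
    (n13 : ¬ G.Adj v1 v3) (n14 : ¬ G.Adj v1 v4) (n15 : ¬ G.Adj v1 v5)
    (n24 : ¬ G.Adj v2 v4) (n25 : ¬ G.Adj v2 v5) (n35 : ¬ G.Adj v3 v5) :
    HasInducedCopy (SimpleGraph.pathGraph 6) G := by
  have d10 := d01.symm; have d20 := d02.symm; have d30 := d03.symm
  have d40 := d04.symm; have d50 := d05.symm; have d21 := d12.symm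
  have d31 := d13.symm; have d41 := d14.symm; have d51 := d15.symm
  have d32 := d23.symm; have d42 := d24.symm; have d52 := d25.symm
  have d43 := d34.symm; have d53 := d35.symm; have d54 := d45.symm
  have e10 := e01.symm; have e21 := e12.symm; have e32 := e23.symm
  have e43 := e34.symm; have e54 := e45.symm
  have n20 : ¬ G.Adj v2 v0 := fun h => n02 h.symm
  have n30 : ¬ G.Adj v3 v0 := fun h => n03 h.symm
  have n40 : ¬ G.Adj v4 v0 := fun h => n04 h.symm
  have n50 : ¬ G.Adj v5 v0 := fun h => n05 h.symm
  have n31 : ¬ G.Adj v3 v1 := fun h => n13 h.symm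
  have n41 : ¬ G.Adj v4 v1 := fun h => n14 h.symm
  have n51 : ¬ G.Adj v5 v1 := fun h => n15 h.symm
  have n42 : ¬ G.Adj v4 v2 := fun h => n24 h.symm
  have n52 : ¬ G.Adj v5 v2 := fun h => n25 h.symm
  have n53 : ¬ G.Adj v5 v3 := fun h => n35 h.symm
  set f : Fin 6 → V := ![v0, v1, v2, v3, v4, v5] with hf
  have hinj : Function.Injective f := by
    intro i j h
    fin_cases i <;> fin_cases j <;> first | rfl | (exfalso; revert h; simp [hf]; assumption)
  have hadj : ∀ i j : Fin 6, (SimpleGraph.pathGraph 6).Adj i j ↔ G.Adj (f i) (f j) := by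
    intro i j
    fin_cases i <;> fin_cases j <;>
      simp [hf, SimpleGraph.pathGraph_adj, show ((3:Fin 6):ℕ) = 3 from rfl,
        show ((4:Fin 6):ℕ) = 4 from rfl, show ((5:Fin 6):ℕ) = 5 from rfl,
        show (![v0,v1,v2,v3,v4,v5] (5:Fin 6)) = v5 from rfl] <;> assumption
  refine ⟨Set.range f, ⟨⟨Equiv.ofInjective f hinj, ?_⟩⟩⟩
  intro a b
  simpa using (hadj a b).symm

end Paper

open Paper in
theorem statement14 {V : Type*} (G : SimpleGraph V)
    (hP6 : HFree G (SimpleGraph.pathGraph 6))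
    (c : V → Bool) (hc : ValidColouring G c)
    (A B : Set V) (hA : A.Nonempty) (hB : B.Nonempty) (hdisj : Disjoint A B)
    (hadj : ∀ a ∈ A, ∀ b ∈ B, G.Adj a b)
    (hblue : ∀ v ∈ A ∪ B, c v = false) :
    ¬ ∃ z₁ z₁' z₂ z₂' : V,
      (z₁ ≠ z₁' ∧ z₁ ≠ z₂ ∧ z₁ ≠ z₂' ∧ z₁' ≠ z₂ ∧ z₁' ≠ z₂' ∧ z₂ ≠ z₂') ∧
      (c z₁ = true ∧ c z₁' = true ∧ c z₂ = true ∧ c z₂' = true) ∧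
      G.Adj z₁ z₁' ∧ G.Adj z₂ z₂' ∧
      (∀ a ∈ ({z₁, z₁'} : Set V), ∀ b ∈ ({z₂, z₂'} : Set V), ¬ G.Adj a b) ∧
      (∃ w ∈ A ∪ B, G.Adj z₁ w) ∧ (∃ w ∈ A ∪ B, G.Adj z₂ w) := by
  rintro ⟨z₁, z₁', z₂, z₂', ⟨q11, q12, q13, q14, q15, q16⟩,
    ⟨r1, r1', r2, r2'⟩, e1, e2, hnon, ⟨w₁, hw₁, a1⟩, ⟨w₂, hw₂, a2⟩⟩
  have key : ∀ w x y : V, c w = false → c x = true → c y = true →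
      G.Adj w x → G.Adj w y → x = y := by
    intro w x y hw hx hy hwx hwy
    exact hc.1 w ⟨hwx, by simp [hx, hw]⟩ ⟨hwy, by simp [hy, hw]⟩
  have nsymm : ∀ {x y : V}, ¬ G.Adj x y → ¬ G.Adj y x := fun h h' => h h'.symm
  have cw₁ : c w₁ = false := hblue _ hw₁
  have cw₂ : c w₂ = false := hblue _ hw₂
  have dzw : ∀ {z w : V}, c z = true → c w = false → z ≠ w :=
    fun hz hw h => by rw [h, hw] at hz; exact absurd hz (by simp)
  have n1'w₁ : ¬ G.Adj z₁' w₁ := fun h => q11 (key w₁ z₁ z₁' cw₁ r1 r1' a1.symm h.symm)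
  have n2w₁ : ¬ G.Adj z₂ w₁ := fun h => q12 (key w₁ z₁ z₂ cw₁ r1 r2 a1.symm h.symm)
  have n2'w₁ : ¬ G.Adj z₂' w₁ := fun h => q13 (key w₁ z₁ z₂' cw₁ r1 r2' a1.symm h.symm)
  have n1w₂ : ¬ G.Adj z₁ w₂ := fun h => q12 (key w₂ z₁ z₂ cw₂ r1 r2 h.symm a2.symm)
  have n1'w₂ : ¬ G.Adj z₁' w₂ := fun h => q14 (key w₂ z₁' z₂ cw₂ r1' r2 h.symm a2.symm)
  have n2'w₂ : ¬ G.Adj z₂' w₂ := fun h => q16 (key w₂ z₂ z₂' cw₂ r2 r2' a2.symm h.symm)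
  have hww' : w₁ ≠ w₂ := fun h => q12 (key w₁ z₁ z₂ cw₁ r1 r2 a1.symm (h ▸ a2.symm))
  have n12 : ¬ G.Adj z₁ z₂ := hnon z₁ (by simp) z₂ (by simp)
  have n12' : ¬ G.Adj z₁ z₂' := hnon z₁ (by simp) z₂' (by simp)
  have n1'2 : ¬ G.Adj z₁' z₂ := hnon z₁' (by simp) z₂ (by simp)
  have n1'2' : ¬ G.Adj z₁' z₂' := hnon z₁' (by simp) z₂' (by simp)
  by_cases hww : G.Adj w₁ w₂
  · exact hP6 (buildP6 G z₁' z₁ w₁ w₂ z₂ z₂'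
      q11.symm (dzw r1' cw₁) (dzw r1' cw₂) q14 q15
      (dzw r1 cw₁) (dzw r1 cw₂) q12 q13
      hww' (dzw r2 cw₁).symm (dzw r2' cw₁).symm
      (dzw r2 cw₂).symm (dzw r2' cw₂).symm q16
      e1.symm a1 hww a2.symm e2
      n1'w₁ n1'w₂ n1'2 n1'2' n1w₂ n12 n12'
      (nsymm n2w₁) (nsymm n2'w₁) (nsymm n2'w₂))
  · obtain ⟨b, hbmem, hbw₁, hbw₂, hbw₁ne, hbw₂ne⟩ :
        ∃ b, b ∈ A ∪ B ∧ G.Adj b w₁ ∧ G.Adj b w₂ ∧ b ≠ w₁ ∧ b ≠ w₂ := by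
      rcases hw₁ with h1 | h1 <;> rcases hw₂ with h2 | h2
      · obtain ⟨b, hb⟩ := hB
        exact ⟨b, Or.inr hb, (hadj _ h1 _ hb).symm, (hadj _ h2 _ hb).symm,
          by intro h; subst h; exact Set.disjoint_right.mp hdisj hb h1,
          by intro h; subst h; exact Set.disjoint_right.mp hdisj hb h2⟩
      · exact absurd (hadj _ h1 _ h2) hww
      · exact absurd ((hadj _ h2 _ h1).symm) hww
      · obtain ⟨a, ha⟩ := hA
        exact ⟨a, Or.inl ha, hadj _ ha _ h1, hadj _ ha _ h2,
          by intro h; subst h; exact Set.disjoint_left.mp hdisj ha h1,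
          by intro h; subst h; exact Set.disjoint_left.mp hdisj ha h2⟩
    have cb : c b = false := hblue _ hbmem
    by_cases hb1 : G.Adj b z₁
    · have nb1' : ¬ G.Adj b z₁' := fun h => q11 (key b z₁ z₁' cb r1 r1' hb1 h)
      have nb2 : ¬ G.Adj b z₂ := fun h => q12 (key b z₁ z₂ cb r1 r2 hb1 h)
      have nb2' : ¬ G.Adj b z₂' := fun h => q13 (key b z₁ z₂' cb r1 r2' hb1 h)
      exact hP6 (buildP6 G z₁' z₁ b w₂ z₂ z₂'
        q11.symm (dzw r1' cb) (dzw r1' cw₂) q14 q15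
        (dzw r1 cb) (dzw r1 cw₂) q12 q13
        hbw₂ne (dzw r2 cb).symm (dzw r2' cb).symm
        (dzw r2 cw₂).symm (dzw r2' cw₂).symm q16
        e1.symm hb1.symm hbw₂ a2.symm e2
        (nsymm nb1') n1'w₂ n1'2 n1'2' n1w₂ n12 n12'
        nb2 nb2' (nsymm n2'w₂))
    · by_cases hb2 : G.Adj b z₂
      · have nb1' : ¬ G.Adj b z₁' := fun h => q14 (key b z₂ z₁' cb r2 r1' hb2 h).symm
        have nb2' : ¬ G.Adj b z₂' := fun h => q16 (key b z₂ z₂' cb r2 r2' hb2 h)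
        exact hP6 (buildP6 G z₁' z₁ w₁ b z₂ z₂'
          q11.symm (dzw r1' cw₁) (dzw r1' cb) q14 q15
          (dzw r1 cw₁) (dzw r1 cb) q12 q13
          hbw₁ne.symm (dzw r2 cw₁).symm (dzw r2' cw₁).symm
          (dzw r2 cb).symm (dzw r2' cb).symm q16
          e1.symm a1 hbw₁.symm hb2 e2
          n1'w₁ (nsymm nb1') n1'2 n1'2' (nsymm hb1) n12 n12'
          (nsymm n2w₁) (nsymm n2'w₁) nb2')
      · by_cases hb3 : G.Adj b z₁'
        · have nb2' : ¬ G.Adj b z₂' := fun h => q15 (key b z₁' z₂' cb r1' r2' hb3 h)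
          exact hP6 (buildP6 G z₂' z₂ w₂ b z₁' z₁
            q16.symm (dzw r2' cw₂) (dzw r2' cb) q15.symm q13.symm
            (dzw r2 cw₂) (dzw r2 cb) q14.symm q12.symm
            hbw₂ne.symm (dzw r1' cw₂).symm (dzw r1 cw₂).symm
            (dzw r1' cb).symm (dzw r1 cb).symm q11.symm
            e2.symm a2 hbw₂.symm hb3 e1.symm
            n2'w₂ (nsymm nb2') (nsymm n1'2') (nsymm n12')
            (nsymm hb2) (nsymm n1'2) (nsymm n12)
            (nsymm n1'w₂) (nsymm n1w₂) hb1)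
        · by_cases hb4 : G.Adj b z₂'
          · exact hP6 (buildP6 G z₁' z₁ w₁ b z₂' z₂
              q11.symm (dzw r1' cw₁) (dzw r1' cb) q15 q14
              (dzw r1 cw₁) (dzw r1 cb) q13 q12
              hbw₁ne.symm (dzw r2' cw₁).symm (dzw r2 cw₁).symm
              (dzw r2' cb).symm (dzw r2 cb).symm q16.symm
              e1.symm a1 hbw₁.symm hb4 e2.symm
              n1'w₁ (nsymm hb3) n1'2' n1'2 (nsymm hb1) n12' n12
              (nsymm n2'w₁) (nsymm n2w₁) hb2)
          · exact hP6 (buildP6 G z₁ w₁ b w₂ z₂ z₂'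
              (dzw r1 cw₁) (dzw r1 cb) (dzw r1 cw₂) q12 q13
              hbw₁ne.symm hww' (dzw r2 cw₁).symm (dzw r2' cw₁).symm
              hbw₂ne (dzw r2 cb).symm (dzw r2' cb).symm
              (dzw r2 cw₂).symm (dzw r2' cw₂).symm q16
              a1 hbw₁.symm hbw₂ a2.symm e2
              (nsymm hb1) n1w₂ n12 n12' hww (nsymm n2w₁) (nsymm n2'w₁)
              hb2 hb4 (nsymm n2'w₂))
end

section
/- Let G be a graph whose vertex set is partitioned into three sets X, Y, Z with X and Y non-empty, and let S ⊆ X and T ⊆ Y satisfy: every vertex of S has exactly one neighbour in Y, and this neighbour belongs to T; every vertex of T has exactly one neighbour in X, and this neighbour belongs to S; no vertex of X∖S has a neighbour in Y; no vertex of Y∖T has a neighbour in X; Z is an independent set; and every vertex of Z has no neighbour in S ∪ T, at most one neighbour in X∖S, and at most one neighbour in Y∖T. Let W be the set of vertices of X ∪ Y having a neighbour in Z, and let U be the set of vertices of Z having both a neighbour in X∖S and a neighbour in Y∖T. If M is a matching of G such that every edge of M has one endpoint in Z and the other endpoint in W, and every vertex of U is an endpoint of an edge of M, then G has a valid red-blue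 colouring in which every vertex of X is red, every vertex of Y is blue, and whose set of bichromatic edges is exactly M together with all edges having one endpoint in S and the other endpoint in T. -/
open Paper in
theorem statement15 {V : Type*} (G : SimpleGraph V) (X Y Z S T : Set V)
    (hXY : Disjoint X Y) (hXZ : Disjoint X Z) (hYZ : Disjoint Y Z)
    (hcover : X ∪ Y ∪ Z = Set.univ)
    (hXne : X.Nonempty) (hYne : Y.Nonempty)
    (hSX : S ⊆ X) (hTY : T ⊆ Y)
    (hS : ∀ v ∈ S, ∃ w ∈ T, G.Adj v w ∧ ∀ w' ∈ Y, G.Adj v w' → w' = w)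
    (hT : ∀ v ∈ T, ∃ w ∈ S, G.Adj v w ∧ ∀ w' ∈ X, G.Adj v w' → w' = w)
    (hXS : ∀ v ∈ X \ S, ∀ w ∈ Y, ¬ G.Adj v w)
    (hYT : ∀ v ∈ Y \ T, ∀ w ∈ X, ¬ G.Adj v w)
    (hZind : ∀ u ∈ Z, ∀ v ∈ Z, ¬ G.Adj u v)
    (hZST : ∀ z ∈ Z, ∀ w ∈ S ∪ T, ¬ G.Adj z w)
    (hZX : ∀ z ∈ Z, {w | w ∈ X \ S ∧ G.Adj z w}.Subsingleton)
    (hZY : ∀ z ∈ Z, {w | w ∈ Y \ T ∧ G.Adj z w}.Subsingleton)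
    (M : Set (Sym2 V)) (hM : IsMatching G M)
    (hMZW : ∀ e ∈ M, ∃ z ∈ Z, ∃ w ∈ (X ∪ Y) ∩ {w | ∃ z' ∈ Z, G.Adj w z'}, e = s(z, w))
    (hMU : ∀ u ∈ Z, ((∃ w ∈ X \ S, G.Adj u w) ∧ (∃ w ∈ Y \ T, G.Adj u w)) →
      ∃ e ∈ M, u ∈ e) :
    ∃ c : V → Bool, ValidColouring G c ∧
      (∀ v ∈ X, c v = true) ∧ (∀ v ∈ Y, c v = false) ∧
      bichromaticEdges G c = M ∪ {e | ∃ u ∈ S, ∃ w ∈ T, G.Adj u w ∧ e = s(u, w)} := by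
  classical
  have hST : Disjoint S T := hXY.mono hSX hTY
  set R : V → V → Prop := fun u v => s(u,v) ∈ M ∨ (u ∈ S ∧ v ∈ T) ∨ (u ∈ T ∧ v ∈ S) with hR
  set c : V → Bool := fun v =>
    if v ∈ X then true
    else if v ∈ Y then false
    else if (∃ x ∈ X, s(v, x) ∈ M) ∨ ((∀ e ∈ M, v ∉ e) ∧ ∃ y ∈ Y, G.Adj v y)
      then false else true with hcdef
  have hcX : ∀ v ∈ X, c v = true := fun v hv => by simp [hcdef, hv]
  have hcY : ∀ v ∈ Y, c v = false := fun v hv => by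
    have hx : v ∉ X := fun h => Set.disjoint_left.1 hXY h hv
    simp [hcdef, hx, hv]
  have hZmem : ∀ v, v ∉ X → v ∉ Y → v ∈ Z := fun v hx hy => by
    have hv : v ∈ X ∪ Y ∪ Z := by rw [hcover]; trivial
    rcases hv with (h | h) | h
    · exact absurd h hx
    · exact absurd h hy
    · exact h
  have hcZ : ∀ z ∈ Z, (c z = false ↔
      ((∃ x ∈ X, s(z,x) ∈ M) ∨ ((∀ e ∈ M, z ∉ e) ∧ ∃ y ∈ Y, G.Adj z y))) := by
    intro z hz
    have hx : z ∉ X := Set.disjoint_right.1 hXZ hz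
    have hy : z ∉ Y := Set.disjoint_right.1 hYZ hz
    simp only [hcdef]
    rw [if_neg hx, if_neg hy]
    split_ifs with h <;> simp [h]
  have hMedge : ∀ e ∈ M, ∃ z ∈ Z, ∃ w, w ∈ X ∪ Y ∧ G.Adj z w ∧ e = s(z,w) := by
    intro e he
    obtain ⟨z, hz, w, hw, hew⟩ := hMZW e he
    have hes := hM.1 he
    rw [hew] at hes
    exact ⟨z, hz, w, hw.1, G.mem_edgeSet.1 hes, hew⟩
  have hXYnZ : ∀ w, w ∈ X ∪ Y → w ∉ Z := by
    rintro w (h | h) hz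
    · exact Set.disjoint_left.1 hXZ h hz
    · exact Set.disjoint_left.1 hYZ h hz
  have hMz : ∀ z ∈ Z, ∀ e ∈ M, z ∈ e →
      ∃ w, w ∈ X ∪ Y ∧ G.Adj z w ∧ e = s(z,w) := by
    intro z hz e he hze
    obtain ⟨z', hz', w, hw, hadj, hew⟩ := hMedge e he
    rw [hew] at hze
    rcases Sym2.mem_iff.1 hze with rfl | rfl
    · exact ⟨w, hw, hadj, hew⟩
    · exact absurd hz (hXYnZ _ hw)
  have hMST : ∀ a ∈ S ∪ T, ∀ b, s(a,b) ∈ M → False := by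
    intro a ha b hab
    obtain ⟨z, hz, w, hw, hadj, hew⟩ := hMedge _ hab
    rcases Sym2.eq_iff.1 hew with ⟨h1, h2⟩ | ⟨h1, h2⟩
    · subst h1
      rcases ha with h | h
      · exact hXYnZ a (Or.inl (hSX h)) hz
      · exact hXYnZ a (Or.inr (hTY h)) hz
    · subst h1
      exact hZST z hz a ha hadj
  have hMnotXY : ∀ a b, a ∈ X ∪ Y → b ∈ X ∪ Y → s(a,b) ∉ M := by
    intro a b ha hb hab
    obtain ⟨z, hz, w, hw, hadj, hew⟩ := hMedge _ hab
    rcases Sym2.eq_iff.1 hew with ⟨h1, h2⟩ | ⟨h1, h2⟩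
    · subst h1
      exact hXYnZ a ha hz
    · subst h2
      exact hXYnZ b hb hz
  have hXYadj : ∀ u ∈ X, ∀ v ∈ Y, G.Adj u v →
      u ∈ S ∧ v ∈ T ∧ (∀ v' ∈ Y, G.Adj u v' → v' = v) := by
    intro u hu v hv hadj
    by_cases huS : u ∈ S
    · obtain ⟨w, hwT, hwadj, huniq⟩ := hS u huS
      have hvw : v = w := huniq v hv hadj
      subst hvw
      exact ⟨huS, hwT, fun v' hv' h => huniq v' hv' h⟩
    · exact absurd hadj (hXS u ⟨hu, huS⟩ v hv)
  -- key lemma, for u in X ∪ Y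
  have key : ∀ u v, G.Adj u v → (u ∈ X ∨ u ∈ Y) → ((c u ≠ c v) ↔ R u v) := by
    intro u v hadj hu
    by_cases hvX : v ∈ X
    · rcases hu with huX | huY
      · -- X X
        refine iff_of_false ?_ ?_
        · rw [hcX u huX, hcX v hvX]; simp
        · rintro (hm | ⟨_, hvT⟩ | ⟨huT, _⟩)
          · exact hMnotXY u v (Or.inl huX) (Or.inl hvX) hm
          · exact Set.disjoint_left.1 hXY hvX (hTY hvT)
          · exact Set.disjoint_left.1 hXY huX (hTY huT)
      · -- Y X
        obtain ⟨hvS, huT, _⟩ := hXYadj v hvX u huY hadj.symm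
        refine iff_of_true ?_ (Or.inr (Or.inr ⟨huT, hvS⟩))
        rw [hcY u huY, hcX v hvX]; simp
    · by_cases hvY : v ∈ Y
      · rcases hu with huX | huY
        · -- X Y
          obtain ⟨huS, hvT, _⟩ := hXYadj u huX v hvY hadj
          refine iff_of_true ?_ (Or.inr (Or.inl ⟨huS, hvT⟩))
          rw [hcX u huX, hcY v hvY]; simp
        · -- Y Y
          refine iff_of_false ?_ ?_
          · rw [hcY u huY, hcY v hvY]; simp
          · rintro (hm | ⟨huS, _⟩ | ⟨_, hvS⟩)
            · exact hMnotXY u v (Or.inr huY) (Or.inr hvY) hm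
            · exact Set.disjoint_left.1 hXY (hSX huS) huY
            · exact Set.disjoint_left.1 hXY (hSX hvS) hvY
      · -- v ∈ Z
        have hvZ : v ∈ Z := hZmem v hvX hvY
        have hRiff : R u v ↔ s(u,v) ∈ M := by
          constructor
          · rintro (hm | ⟨_, hvT⟩ | ⟨_, hvS⟩)
            · exact hm
            · exact absurd (hTY hvT) hvY
            · exact absurd (hSX hvS) hvX
          · exact Or.inl
        rw [hRiff]
        rcases hu with huX | huY
        · -- X Z
          have huXS : u ∈ X \ S :=
            ⟨huX, fun hS' => hZST v hvZ u (Or.inl hS') hadj.symm⟩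
          have h1 : c u ≠ c v ↔ c v = false := by
            rw [hcX u huX]; cases h' : c v <;> simp
          rw [h1, hcZ v hvZ]
          constructor
          · rintro (⟨x, hx, hxM⟩ | ⟨hunm, y, hy, hyadj⟩)
            · have hadjvx : G.Adj v x := G.mem_edgeSet.1 (hM.1 hxM)
              have hxXS : x ∈ X \ S :=
                ⟨hx, fun hS' => hZST v hvZ x (Or.inl hS') hadjvx⟩
              have : u = x := hZX v hvZ ⟨huXS, hadj.symm⟩ ⟨hxXS, hadjvx⟩
              subst this
              rwa [Sym2.eq_swap]
            · exfalso
              have hyYT : y ∈ Y \ T :=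
                ⟨hy, fun hT' => hZST v hvZ y (Or.inr hT') hyadj⟩
              obtain ⟨e, he, hve⟩ := hMU v hvZ ⟨⟨u, huXS, hadj.symm⟩, ⟨y, hyYT, hyadj⟩⟩
              exact hunm e he hve
          · intro hm
            exact Or.inl ⟨u, huX, by rwa [Sym2.eq_swap]⟩
        · -- Y Z
          have huYT : u ∈ Y \ T :=
            ⟨huY, fun hT' => hZST v hvZ u (Or.inr hT') hadj.symm⟩
          have h1 : c u ≠ c v ↔ c v = true := by
            rw [hcY u huY]; cases h' : c v <;> simp
          have h2 : c v = true ↔ ¬ (c v = false) := by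
            cases h' : c v <;> simp
          rw [h1, h2, hcZ v hvZ]
          constructor
          · intro hn
            push_neg at hn
            obtain ⟨hnA, hnB⟩ := hn
            have hmatched : ∃ e ∈ M, v ∈ e := by
              by_contra hcon
              push_neg at hcon
              exact (hnB hcon) u huY hadj.symm
            obtain ⟨e, he, hve⟩ := hmatched
            obtain ⟨w, hw, hadjvw, hew⟩ := hMz v hvZ e he hve
            rcases hw with hwX | hwY
            · exact absurd (hew ▸ he) (by exact fun h => hnA w hwX h)
            · have hwYT : w ∈ Y \ T :=
                ⟨hwY, fun hT' => hZST v hvZ w (Or.inr hT') hadjvw⟩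
              have : u = w := hZY v hvZ ⟨huYT, hadj.symm⟩ ⟨hwYT, hadjvw⟩
              subst this
              rw [Sym2.eq_swap, ← hew]
              exact he
          · intro hm
            rintro (⟨x, hx, hxM⟩ | ⟨hunm, _⟩)
            · have hvm : s(v,u) ∈ M := by rwa [Sym2.eq_swap]
              have := hM.2 _ hxM _ hvm v (Sym2.mem_iff.2 (Or.inl rfl))
                (Sym2.mem_iff.2 (Or.inl rfl))
              have hxu : x = u := Sym2.congr_right.1 this
              subst hxu
              exact Set.disjoint_left.1 hXY hx huY
            · exact hunm _ hm (Sym2.mem_iff.2 (Or.inr rfl))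
  have hRsymm : ∀ u v, R v u ↔ R u v := by
    intro u v
    simp only [hR]
    rw [Sym2.eq_swap]
    tauto
  have hbi : ∀ u v, G.Adj u v → ((c u ≠ c v) ↔ R u v) := by
    intro u v hadj
    by_cases huX : u ∈ X
    · exact key u v hadj (Or.inl huX)
    · by_cases huY : u ∈ Y
      · exact key u v hadj (Or.inr huY)
      · have huZ : u ∈ Z := hZmem u huX huY
        by_cases hvX : v ∈ X
        · rw [← hRsymm, ← key v u hadj.symm (Or.inl hvX)]
          exact ne_comm
        · by_cases hvY : v ∈ Y
          · rw [← hRsymm, ← key v u hadj.symm (Or.inr hvY)]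
            exact ne_comm
          · exact absurd hadj (hZind u huZ v (hZmem v hvX hvY))
  refine ⟨c, ⟨?_, ?_, ?_⟩, hcX, hcY, ?_⟩
  · -- subsingleton
    intro v w1 h1 w2 h2
    have R1 : R v w1 := (hbi v w1 h1.1).1 (Ne.symm h1.2)
    have R2 : R v w2 := (hbi v w2 h2.1).1 (Ne.symm h2.2)
    rcases R1 with m1 | st1
    · rcases R2 with m2 | st2
      · have := hM.2 _ m1 _ m2 v (Sym2.mem_iff.2 (Or.inl rfl)) (Sym2.mem_iff.2 (Or.inl rfl))
        exact Sym2.congr_right.1 this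
      · exfalso
        rcases st2 with ⟨hvS, _⟩ | ⟨hvT, _⟩
        · exact hMST v (Or.inl hvS) w1 m1
        · exact hMST v (Or.inr hvT) w1 m1
    · rcases R2 with m2 | st2
      · exfalso
        rcases st1 with ⟨hvS, _⟩ | ⟨hvT, _⟩
        · exact hMST v (Or.inl hvS) w2 m2
        · exact hMST v (Or.inr hvT) w2 m2
      · rcases st1 with ⟨hvS, hw1T⟩ | ⟨hvT, hw1S⟩
        · rcases st2 with ⟨_, hw2T⟩ | ⟨hvT, _⟩
          · obtain ⟨w, hwT, hwadj, huniq⟩ := hS v hvS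
            rw [huniq w1 (hTY hw1T) h1.1, huniq w2 (hTY hw2T) h2.1]
          · exact absurd hvT (Set.disjoint_left.1 hST hvS)
        · rcases st2 with ⟨hvS, _⟩ | ⟨_, hw2S⟩
          · exact absurd hvT (Set.disjoint_left.1 hST hvS)
          · obtain ⟨w, hwS, hwadj, huniq⟩ := hT v hvT
            rw [huniq w1 (hSX hw1S) h1.1, huniq w2 (hSX hw2S) h2.1]
  · obtain ⟨x, hx⟩ := hXne
    exact ⟨x, hcX x hx⟩
  · obtain ⟨y, hy⟩ := hYne
    exact ⟨y, hcY y hy⟩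
  · ext e
    constructor
    · rintro ⟨hes, u, w, rfl, hne⟩
      have hadj : G.Adj u w := G.mem_edgeSet.1 hes
      rcases (hbi u w hadj).1 hne with hm | ⟨huS, hwT⟩ | ⟨huT, hwS⟩
      · exact Or.inl hm
      · exact Or.inr ⟨u, huS, w, hwT, hadj, rfl⟩
      · exact Or.inr ⟨w, hwS, u, huT, hadj.symm, Sym2.eq_swap.symm⟩
    · rintro (he | ⟨a, haS, b, hbT, hadj, rfl⟩)
      · obtain ⟨z, hz, w, hw, hadj, hew⟩ := hMedge e he
        refine ⟨hM.1 he, z, w, hew, ?_⟩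
        exact (hbi z w hadj).2 (Or.inl (hew ▸ he))
      · refine ⟨G.mem_edgeSet.2 hadj, a, b, rfl, ?_⟩
        rw [hcX a (hSX haS), hcY b (hTY hbT)]
        simp
end

section
/- Let G be a graph whose vertex set is partitioned into three sets X, Y, Z with X and Y non-empty, and let S ⊆ X and T ⊆ Y satisfy: every vertex of S has exactly one neighbour in Y, and this neighbour belongs to T; every vertex of T has exactly one neighbour in X, and this neighbour belongs to S; no vertex of X∖S has a neighbour in Y; no vertex of Y∖T has a neighbour in X; Z is an independent set; and every vertex of Z has no neighbour in S ∪ T, at most one neighbour in X∖S, and at most one neighbour in Y∖T. Let W be the set of vertices of X ∪ Y having a neighbour in Z, and let U be the set of vertices of Z having both a neighbour in X∖S and a neighbour in Y∖T. Then for every valid red-blue colouring of G in which every vertex of X is red and every vertex of Y is blue, the set M of bichromatic edges having an endpoint in Z is a matching of G, every edge of M has one endpoint in Z and the other endpoint in W, every vertex of U is an endpoint of an edge of M, and every bichromatic edge not in M has one endpoint in S and the other endpoint in T. -/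
open Paper in
theorem statement16 {V : Type*} (G : SimpleGraph V) (X Y Z S T : Set V)
    (hXY : Disjoint X Y) (hXZ : Disjoint X Z) (hYZ : Disjoint Y Z)
    (hcover : X ∪ Y ∪ Z = Set.univ)
    (hXne : X.Nonempty) (hYne : Y.Nonempty)
    (hSX : S ⊆ X) (hTY : T ⊆ Y)
    (hS : ∀ v ∈ S, ∃ w ∈ T, G.Adj v w ∧ ∀ w' ∈ Y, G.Adj v w' → w' = w)
    (hT : ∀ v ∈ T, ∃ w ∈ S, G.Adj v w ∧ ∀ w' ∈ X, G.Adj v w' → w' = w)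
    (hXS : ∀ v ∈ X \ S, ∀ w ∈ Y, ¬ G.Adj v w)
    (hYT : ∀ v ∈ Y \ T, ∀ w ∈ X, ¬ G.Adj v w)
    (hZind : ∀ u ∈ Z, ∀ v ∈ Z, ¬ G.Adj u v)
    (hZST : ∀ z ∈ Z, ∀ w ∈ S ∪ T, ¬ G.Adj z w)
    (hZX : ∀ z ∈ Z, {w | w ∈ X \ S ∧ G.Adj z w}.Subsingleton)
    (hZY : ∀ z ∈ Z, {w | w ∈ Y \ T ∧ G.Adj z w}.Subsingleton)
    (c : V → Bool) (hc : ValidColouring G c)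
    (hXred : ∀ v ∈ X, c v = true) (hYblue : ∀ v ∈ Y, c v = false) :
    ∀ M : Set (Sym2 V), M = {e ∈ bichromaticEdges G c | ∃ z ∈ Z, z ∈ e} →
      IsMatching G M ∧
      (∀ e ∈ M, ∃ z ∈ Z, ∃ w ∈ (X ∪ Y) ∩ {w | ∃ z' ∈ Z, G.Adj w z'}, e = s(z, w)) ∧
      (∀ u ∈ Z, ((∃ w ∈ X \ S, G.Adj u w) ∧ (∃ w ∈ Y \ T, G.Adj u w)) → ∃ e ∈ M, u ∈ e) ∧
      (∀ e ∈ bichromaticEdges G c, e ∉ M → ∃ u ∈ S, ∃ w ∈ T, e = s(u, w)) := by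
  intro M hM
  subst hM
  obtain ⟨hsub, -, -⟩ := hc
  -- any two bichromatic edges sharing a vertex coincide
  have key : ∀ e ∈ bichromaticEdges G c, ∀ f ∈ bichromaticEdges G c,
      ∀ v : V, v ∈ e → v ∈ f → e = f := by
    rintro e ⟨he1, a, b, rfl, hab⟩ f ⟨hf1, a', b', rfl, hab'⟩ v hve hvf
    rw [SimpleGraph.mem_edgeSet] at he1 hf1
    rcases Sym2.mem_iff.mp hve with rfl | rfl <;>
      rcases Sym2.mem_iff.mp hvf with rfl | rfl
    · have : b = b' := hsub v ⟨he1, hab.symm⟩ ⟨hf1, hab'.symm⟩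
      rw [this]
    · have : b = a' := hsub v ⟨he1, hab.symm⟩ ⟨hf1.symm, hab'⟩
      rw [this]; exact Sym2.eq_swap
    · have : a = b' := hsub v ⟨he1.symm, hab⟩ ⟨hf1, hab'.symm⟩
      rw [this]; exact Sym2.eq_swap
    · have : a = a' := hsub v ⟨he1.symm, hab⟩ ⟨hf1.symm, hab'⟩
      rw [this]
  refine ⟨⟨fun e he => he.1.1, fun e he f hf v hve hvf => key e he.1 f hf.1 v hve hvf⟩, ?_, ?_, ?_⟩
  · -- every edge of M joins Z to W
    rintro e ⟨⟨he1, hbi⟩, z, hzZ, hze⟩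
    obtain ⟨a, b, rfl, hab⟩ := hbi
    rw [SimpleGraph.mem_edgeSet] at he1
    have notZ : ∀ u w : V, G.Adj u w → u ∈ Z → w ∉ Z := fun u w h hu hw => hZind u hu w hw h
    rcases Sym2.mem_iff.mp hze with rfl | rfl
    · have hbZ : b ∉ Z := notZ z b he1 hzZ
      have hbXY : b ∈ X ∪ Y := by
        have := Set.mem_univ b
        rw [← hcover] at this
        rcases this with h | h
        · exact h
        · exact absurd h hbZ
      exact ⟨z, hzZ, b, ⟨hbXY, z, hzZ, he1.symm⟩, rfl⟩
    · have haZ : a ∉ Z := notZ z a he1.symm hzZ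
      have haXY : a ∈ X ∪ Y := by
        have := Set.mem_univ a
        rw [← hcover] at this
        rcases this with h | h
        · exact h
        · exact absurd h haZ
      exact ⟨z, hzZ, a, ⟨haXY, z, hzZ, he1⟩, Sym2.eq_swap⟩
  · -- every vertex of U is saturated by M
    rintro u huZ ⟨⟨x, hxXS, hux⟩, ⟨y, hyYT, huy⟩⟩
    have hcx : c x = true := hXred x hxXS.1
    have hcy : c y = false := hYblue y hyYT.1
    cases hcu : c u
    · -- u blue: edge u-x bichromatic
      refine ⟨s(u, x), ⟨⟨hux, u, x, rfl, ?_⟩, u, huZ, Sym2.mem_mk_left u x⟩, Sym2.mem_mk_left u x⟩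
      rw [hcu, hcx]; simp
    · refine ⟨s(u, y), ⟨⟨huy, u, y, rfl, ?_⟩, u, huZ, Sym2.mem_mk_left u y⟩, Sym2.mem_mk_left u y⟩
      rw [hcu, hcy]; simp
  · -- bichromatic edges outside M go from S to T
    rintro e ⟨he1, a, b, rfl, hab⟩ heM
    rw [SimpleGraph.mem_edgeSet] at he1
    have hnoZ : ∀ v : V, v ∈ s(a, b) → v ∉ Z := by
      intro v hv hvZ
      exact heM ⟨⟨he1, a, b, rfl, hab⟩, v, hvZ, hv⟩
    have haZ : a ∉ Z := hnoZ a (Sym2.mem_mk_left a b)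
    have hbZ : b ∉ Z := hnoZ b (Sym2.mem_mk_right a b)
    have haXY : a ∈ X ∪ Y := by
      have := Set.mem_univ a; rw [← hcover] at this
      rcases this with h | h
      · exact h
      · exact absurd h haZ
    have hbXY : b ∈ X ∪ Y := by
      have := Set.mem_univ b; rw [← hcover] at this
      rcases this with h | h
      · exact h
      · exact absurd h hbZ
    -- WLOG handle both colour configurations
    have main : ∀ p q : V, G.Adj p q → p ∈ X ∪ Y → q ∈ X ∪ Y → c p = true → c q = false →
        p ∈ S ∧ q ∈ T := by
      intro p q hpq hpXY hqXY hcp hcq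
      have hpX : p ∈ X := by
        rcases hpXY with h | h
        · exact h
        · rw [hYblue p h] at hcp; exact absurd hcp (by simp)
      have hqY : q ∈ Y := by
        rcases hqXY with h | h
        · rw [hXred q h] at hcq; exact absurd hcq (by simp)
        · exact h
      constructor
      · by_contra hpS
        exact hXS p ⟨hpX, hpS⟩ q hqY hpq
      · by_contra hqT
        exact hYT q ⟨hqY, hqT⟩ p hpX hpq.symm
    cases hca : c a <;> cases hcb : c b
    · rw [hca, hcb] at hab; exact absurd rfl hab
    · obtain ⟨hbS, haT⟩ := main b a he1.symm hbXY haXY hcb hca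
      exact ⟨b, hbS, a, haT, Sym2.eq_swap⟩
    · obtain ⟨haS, hbT⟩ := main a b he1 haXY hbXY hca hcb
      exact ⟨a, haS, b, hbT, rfl⟩
    · rw [hca, hcb] at hab; exact absurd rfl hab
end

section
/- Let G be a graph whose vertex set is partitioned into three sets X, Y, Z with X and Y non-empty, and let S ⊆ X and T ⊆ Y satisfy: every vertex of S has exactly one neighbour in Y, and this neighbour belongs to T; every vertex of T has exactly one neighbour in X, and this neighbour belongs to S; no vertex of X∖S has a neighbour in Y; no vertex of Y∖T has a neighbour in X; Z is an independent set; and every vertex of Z has no neighbour in S ∪ T, at most one neighbour in X∖S, and at most one neighbour in Y∖T. Then G has a perfect-extendable valid red-blue colouring in which every vertex of X is red and every vertex of Y is blue if and only if the subgraph of G induced by the vertices outside S ∪ T has a perfect matching. -/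
open Paper in
theorem statement17 {V : Type*} (G : SimpleGraph V) (X Y Z S T : Set V)
    (hXY : Disjoint X Y) (hXZ : Disjoint X Z) (hYZ : Disjoint Y Z)
    (hcover : X ∪ Y ∪ Z = Set.univ)
    (hXne : X.Nonempty) (hYne : Y.Nonempty)
    (hSX : S ⊆ X) (hTY : T ⊆ Y)
    (hS : ∀ v ∈ S, ∃ w ∈ T, G.Adj v w ∧ ∀ w' ∈ Y, G.Adj v w' → w' = w)
    (hT : ∀ v ∈ T, ∃ w ∈ S, G.Adj v w ∧ ∀ w' ∈ X, G.Adj v w' → w' = w)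
    (hXS : ∀ v ∈ X \ S, ∀ w ∈ Y, ¬ G.Adj v w)
    (hYT : ∀ v ∈ Y \ T, ∀ w ∈ X, ¬ G.Adj v w)
    (hZind : ∀ u ∈ Z, ∀ v ∈ Z, ¬ G.Adj u v)
    (hZST : ∀ z ∈ Z, ∀ w ∈ S ∪ T, ¬ G.Adj z w)
    (hZX : ∀ z ∈ Z, {w | w ∈ X \ S ∧ G.Adj z w}.Subsingleton)
    (hZY : ∀ z ∈ Z, {w | w ∈ Y \ T ∧ G.Adj z w}.Subsingleton)
    :
    (∃ c : V → Bool, PerfectExtendable G c ∧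
      (∀ v ∈ X, c v = true) ∧ (∀ v ∈ Y, c v = false)) ↔
    (∃ P : Set (Sym2 ((S ∪ T : Set V)ᶜ : Set V)),
      IsPerfectMatching (G.induce (S ∪ T : Set V)ᶜ) P) := by
  classical
  have htri : ∀ v : V, v ∈ X ∨ v ∈ Y ∨ v ∈ Z := by
    intro v
    have : v ∈ X ∪ Y ∪ Z := hcover ▸ Set.mem_univ v
    simpa [Set.mem_union, or_assoc] using this
  have hZC : ∀ z ∈ Z, z ∈ (S ∪ T : Set V)ᶜ := by
    intro z hz h
    rcases h with h | h
    · exact Set.disjoint_left.mp hXZ (hSX h) hz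
    · exact Set.disjoint_left.mp hYZ (hTY h) hz
  have hS' : ∀ v : V, ∃ w : V, v ∈ S → w ∈ T ∧ G.Adj v w ∧ ∀ w' ∈ Y, G.Adj v w' → w' = w := by
    intro v
    by_cases h : v ∈ S
    · obtain ⟨w, hw1, hw2, hw3⟩ := hS v h
      exact ⟨w, fun _ => ⟨hw1, hw2, hw3⟩⟩
    · exact ⟨v, fun hv => absurd hv h⟩
  have hT' : ∀ v : V, ∃ w : V, v ∈ T → w ∈ S ∧ G.Adj v w ∧ ∀ w' ∈ X, G.Adj v w' → w' = w := by
    intro v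
    by_cases h : v ∈ T
    · obtain ⟨w, hw1, hw2, hw3⟩ := hT v h
      exact ⟨w, fun _ => ⟨hw1, hw2, hw3⟩⟩
    · exact ⟨v, fun hv => absurd hv h⟩
  choose tm htm using hS'
  choose sm hsm using hT'
  have hsm_tm : ∀ v ∈ S, sm (tm v) = v := fun v hv =>
    ((hsm (tm v) (htm v hv).1).2.2 v (hSX hv) (htm v hv).2.1.symm).symm
  have htm_sm : ∀ t ∈ T, tm (sm t) = t := fun t ht =>
    ((htm (sm t) (hsm t ht).1).2.2 t (hTY ht) (hsm t ht).2.1.symm).symm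
  have hind : ∀ (a b : ((S ∪ T : Set V)ᶜ : Set V)),
      (G.induce (S ∪ T : Set V)ᶜ).Adj a b ↔ G.Adj ↑a ↑b := fun a b => by
    simp [SimpleGraph.comap]
  constructor
  · rintro ⟨c, ⟨⟨hval, -, -⟩, P, ⟨⟨hPE, hPd⟩, hPsat⟩, hPbi⟩, hcX, hcY⟩
    have hSTedge : ∀ v ∈ S, s(v, tm v) ∈ P := by
      intro v hv
      apply hPbi
      refine ⟨G.mem_edgeSet.2 (htm v hv).2.1, v, tm v, rfl, ?_⟩
      rw [hcX v (hSX hv), hcY _ (hTY (htm v hv).1)]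
      simp
    have hclosed : ∀ e ∈ P, ∀ u v : V, e = s(u, v) → u ∈ S ∪ T → v ∈ S ∪ T := by
      intro e he u v hev hu
      rcases hu with hu | hu
      · have h1 : s(u, tm u) ∈ P := hSTedge u hu
        have h2 : e = s(u, tm u) :=
          hPd e he _ h1 u (by rw [hev]; simp) (by simp)
        rw [hev] at h2
        rcases Sym2.eq_iff.1 h2 with ⟨-, h⟩ | ⟨-, h⟩
        · exact Or.inr (by rw [h]; exact (htm u hu).1)
        · exact Or.inl (by rw [h]; exact hu)
      · have h1 : s(sm u, u) ∈ P := by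
          have := hSTedge (sm u) (hsm u hu).1
          rwa [htm_sm u hu] at this
        have h2 : e = s(sm u, u) :=
          hPd e he _ h1 u (by rw [hev]; simp) (by simp)
        rw [hev] at h2
        rcases Sym2.eq_iff.1 h2 with ⟨-, h⟩ | ⟨-, h⟩
        · exact Or.inr (by rw [h]; exact hu)
        · exact Or.inl (by rw [h]; exact (hsm u hu).1)
    refine ⟨{e | e.map Subtype.val ∈ P}, ⟨?_, ?_⟩, ?_⟩
    · intro e he
      induction e using Sym2.ind with
      | _ a b =>
        rw [Set.mem_setOf_eq, Sym2.map_pair_eq] at he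
        rw [SimpleGraph.mem_edgeSet, hind]
        exact G.mem_edgeSet.1 (hPE he)
    · intro e he f hf v hve hvf
      have h1 : (v : V) ∈ e.map Subtype.val := Sym2.mem_map.2 ⟨v, hve, rfl⟩
      have h2 : (v : V) ∈ f.map Subtype.val := Sym2.mem_map.2 ⟨v, hvf, rfl⟩
      exact Sym2.map.injective Subtype.val_injective (hPd _ he _ hf _ h1 h2)
    · intro v
      obtain ⟨e, he, hve⟩ := hPsat ↑v
      induction e using Sym2.ind with
      | _ a b =>
        rcases Sym2.mem_iff.1 hve with h | h
        · have hb : b ∈ (S ∪ T : Set V)ᶜ := by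
            intro hb
            exact v.2 (h ▸ hclosed _ he b a (Sym2.eq_swap ..) hb)
          refine ⟨s(v, ⟨b, hb⟩), ?_, by simp⟩
          rw [Set.mem_setOf_eq, Sym2.map_pair_eq]
          simpa [h] using he
        · have ha : a ∈ (S ∪ T : Set V)ᶜ := by
            intro ha
            exact v.2 (h ▸ hclosed _ he a b rfl ha)
          refine ⟨s(v, ⟨a, ha⟩), ?_, by simp⟩
          rw [Set.mem_setOf_eq, Sym2.map_pair_eq]
          rw [Sym2.eq_swap]
          simpa [h] using he
  · rintro ⟨P', ⟨⟨hP'E, hP'd⟩, hP'sat⟩⟩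
    have bne1 : ∀ b : Bool, b ≠ true → b = false := by decide
    have bne2 : ∀ b : Bool, b ≠ false → b = true := by decide
    have hpart : ∀ v : ((S ∪ T : Set V)ᶜ : Set V), ∃ w, s(v, w) ∈ P' := by
      intro v
      obtain ⟨e, he, hve⟩ := hP'sat v
      induction e using Sym2.ind with
      | _ a b =>
        rcases Sym2.mem_iff.1 hve with rfl | rfl
        · exact ⟨b, he⟩
        · exact ⟨a, by rwa [Sym2.eq_swap]⟩
    choose pa hpa using hpart
    have hpaAdj : ∀ v : ((S ∪ T : Set V)ᶜ : Set V), G.Adj ↑v ↑(pa v) := by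
      intro v
      have := hP'E (hpa v)
      rwa [SimpleGraph.mem_edgeSet, hind] at this
    have hpaU : ∀ v w, s(v, w) ∈ P' → w = pa v := by
      intro v w hw
      have h := hP'd _ hw _ (hpa v) v (by simp) (by simp)
      rcases Sym2.eq_iff.1 h with ⟨-, h2⟩ | ⟨h1, h2⟩
      · exact h2
      · exact h2.trans h1
    have hpaInv : ∀ v, pa (pa v) = v := fun v =>
      (hpaU (pa v) v (by rw [Sym2.eq_swap]; exact hpa v)).symm
    have hZloc : ∀ z, ∀ hz : z ∈ Z, (pa ⟨z, hZC z hz⟩).1 ∈ (X \ S) ∪ (Y \ T) := by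
      intro z hz
      have hadj : G.Adj z (pa ⟨z, hZC z hz⟩).1 := hpaAdj ⟨z, hZC z hz⟩
      have hwC : (pa ⟨z, hZC z hz⟩).1 ∈ (S ∪ T : Set V)ᶜ := (pa ⟨z, hZC z hz⟩).2
      rcases htri (pa ⟨z, hZC z hz⟩).1 with h | h | h
      · exact Or.inl ⟨h, fun hs => hwC (Or.inl hs)⟩
      · exact Or.inr ⟨h, fun ht => hwC (Or.inr ht)⟩
      · exact absurd hadj (hZind z hz _ h)
    let c : V → Bool := fun v =>
      if v ∈ X then true
      else if v ∈ Y then false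
      else if hv : v ∈ (S ∪ T : Set V)ᶜ then decide ((pa ⟨v, hv⟩).1 ∈ Y) else false
    have hcX' : ∀ v ∈ X, c v = true := by
      intro v hv
      simp only [c]
      rw [if_pos hv]
    have hcY' : ∀ v ∈ Y, c v = false := by
      intro v hv
      have hnx : v ∉ X := fun h => Set.disjoint_left.mp hXY h hv
      simp only [c]
      rw [if_neg hnx, if_pos hv]
    have hcZ' : ∀ z, ∀ hz : z ∈ Z, c z = decide ((pa ⟨z, hZC z hz⟩).1 ∈ Y) := by
      intro z hz
      have hnx : z ∉ X := fun h => Set.disjoint_left.mp hXZ h hz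
      have hny : z ∉ Y := fun h => Set.disjoint_left.mp hYZ h hz
      simp only [c]
      rw [if_neg hnx, if_neg hny, dif_pos (hZC z hz)]
    have hctrue : ∀ v, c v = true → v ∈ X ∨ ∃ hz : v ∈ Z, (pa ⟨v, hZC v hz⟩).1 ∈ Y \ T := by
      intro v hv
      rcases htri v with h | h | h
      · exact Or.inl h
      · rw [hcY' v h] at hv; exact absurd hv (by simp)
      · refine Or.inr ⟨h, ?_⟩
        rw [hcZ' v h] at hv
        have hY : (pa ⟨v, hZC v h⟩).1 ∈ Y := of_decide_eq_true hv
        rcases hZloc v h with h2 | h2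
        · exact absurd hY (Set.disjoint_left.mp hXY h2.1)
        · exact h2
    have hcfalse : ∀ v, c v = false → v ∈ Y ∨ ∃ hz : v ∈ Z, (pa ⟨v, hZC v hz⟩).1 ∈ X \ S := by
      intro v hv
      rcases htri v with h | h | h
      · rw [hcX' v h] at hv; exact absurd hv (by simp)
      · exact Or.inl h
      · refine Or.inr ⟨h, ?_⟩
        rw [hcZ' v h] at hv
        have hY : (pa ⟨v, hZC v h⟩).1 ∉ Y := of_decide_eq_false hv
        rcases hZloc v h with h2 | h2
        · exact h2
        · exact absurd h2.1 hY
    refine ⟨c, ⟨⟨?_, ?_, ?_⟩,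
      {e | (∃ e' ∈ P', e = e'.map Subtype.val) ∨ (∃ v ∈ S, e = s(v, tm v))},
      ⟨⟨?_, ?_⟩, ?_⟩, ?_⟩, hcX', hcY'⟩
    · -- validity: subsingleton of opposite-coloured neighbourhoods
      intro v w1 hw1 w2 hw2
      obtain ⟨hadj1, hne1⟩ := hw1
      obtain ⟨hadj2, hne2⟩ := hw2
      rcases htri v with hvX | hvY | hvZ
      · by_cases hvS : v ∈ S
        · have key : ∀ w, G.Adj v w → c w ≠ c v → w = tm v := by
            intro w hadj hne
            have hcw : c w = false := bne1 _ (by rw [hcX' v hvX] at hne; exact hne)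
            rcases hcfalse w hcw with hY | ⟨hz, -⟩
            · exact (htm v hvS).2.2 w hY hadj
            · exact absurd hadj.symm (hZST w hz v (Or.inl hvS))
          exact (key w1 hadj1 hne1).trans (key w2 hadj2 hne2).symm
        · have hvC : v ∈ (S ∪ T : Set V)ᶜ := fun h =>
            h.elim hvS (fun ht => Set.disjoint_left.mp hXY hvX (hTY ht))
          have key : ∀ w, G.Adj v w → c w ≠ c v → w = (pa ⟨v, hvC⟩).1 := by
            intro w hadj hne
            have hcw : c w = false := bne1 _ (by rw [hcX' v hvX] at hne; exact hne)
            rcases hcfalse w hcw with hY | ⟨hz, hp⟩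
            · exact absurd hadj (hXS v ⟨hvX, hvS⟩ w hY)
            · have m1 : v ∈ {t | t ∈ X \ S ∧ G.Adj w t} := ⟨⟨hvX, hvS⟩, hadj.symm⟩
              have m2 : (pa ⟨w, hZC w hz⟩).1 ∈ {t | t ∈ X \ S ∧ G.Adj w t} :=
                ⟨hp, hpaAdj ⟨w, hZC w hz⟩⟩
              have h1 : v = (pa ⟨w, hZC w hz⟩).1 := hZX w hz m1 m2
              have h2 : pa ⟨w, hZC w hz⟩ = ⟨v, hvC⟩ := Subtype.ext h1.symm
              have h3 := hpaInv ⟨w, hZC w hz⟩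
              rw [h2] at h3
              exact (congrArg Subtype.val h3).symm
          exact (key w1 hadj1 hne1).trans (key w2 hadj2 hne2).symm
      · by_cases hvT : v ∈ T
        · have key : ∀ w, G.Adj v w → c w ≠ c v → w = sm v := by
            intro w hadj hne
            have hcw : c w = true := bne2 _ (by rw [hcY' v hvY] at hne; exact hne)
            rcases hctrue w hcw with hX | ⟨hz, -⟩
            · exact (hsm v hvT).2.2 w hX hadj
            · exact absurd hadj.symm (hZST w hz v (Or.inr hvT))
          exact (key w1 hadj1 hne1).trans (key w2 hadj2 hne2).symm
        · have hvC : v ∈ (S ∪ T : Set V)ᶜ := fun h =>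
            h.elim (fun hs => Set.disjoint_left.mp hXY (hSX hs) hvY) hvT
          have key : ∀ w, G.Adj v w → c w ≠ c v → w = (pa ⟨v, hvC⟩).1 := by
            intro w hadj hne
            have hcw : c w = true := bne2 _ (by rw [hcY' v hvY] at hne; exact hne)
            rcases hctrue w hcw with hX | ⟨hz, hp⟩
            · exact absurd hadj (hYT v ⟨hvY, hvT⟩ w hX)
            · have m1 : v ∈ {t | t ∈ Y \ T ∧ G.Adj w t} := ⟨⟨hvY, hvT⟩, hadj.symm⟩
              have m2 : (pa ⟨w, hZC w hz⟩).1 ∈ {t | t ∈ Y \ T ∧ G.Adj w t} :=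
                ⟨hp, hpaAdj ⟨w, hZC w hz⟩⟩
              have h1 : v = (pa ⟨w, hZC w hz⟩).1 := hZY w hz m1 m2
              have h2 : pa ⟨w, hZC w hz⟩ = ⟨v, hvC⟩ := Subtype.ext h1.symm
              have h3 := hpaInv ⟨w, hZC w hz⟩
              rw [h2] at h3
              exact (congrArg Subtype.val h3).symm
          exact (key w1 hadj1 hne1).trans (key w2 hadj2 hne2).symm
      · cases hcv : c v with
        | false =>
          have key : ∀ w, G.Adj v w → c w ≠ c v → w ∈ {u | u ∈ X \ S ∧ G.Adj v u} := by
            intro w hadj hne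
            have hcw : c w = true := bne2 _ (by rw [hcv] at hne; exact hne)
            rcases hctrue w hcw with hX | ⟨hz, -⟩
            · exact ⟨⟨hX, fun hs => hZST v hvZ w (Or.inl hs) hadj⟩, hadj⟩
            · exact absurd hadj (hZind v hvZ w hz)
          exact hZX v hvZ (key w1 hadj1 hne1) (key w2 hadj2 hne2)
        | true =>
          have key : ∀ w, G.Adj v w → c w ≠ c v → w ∈ {u | u ∈ Y \ T ∧ G.Adj v u} := by
            intro w hadj hne
            have hcw : c w = false := bne1 _ (by rw [hcv] at hne; exact hne)
            rcases hcfalse w hcw with hY | ⟨hz, -⟩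
            · exact ⟨⟨hY, fun ht => hZST v hvZ w (Or.inr ht) hadj⟩, hadj⟩
            · exact absurd hadj (hZind v hvZ w hz)
          exact hZY v hvZ (key w1 hadj1 hne1) (key w2 hadj2 hne2)
    · exact ⟨hXne.choose, hcX' _ hXne.choose_spec⟩
    · exact ⟨hYne.choose, hcY' _ hYne.choose_spec⟩
    · -- P ⊆ edgeSet
      rintro e (⟨e', he', rfl⟩ | ⟨v, hv, rfl⟩)
      · induction e' using Sym2.ind with
        | _ a b =>
          rw [Sym2.map_pair_eq, SimpleGraph.mem_edgeSet]
          have := hP'E he'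
          rwa [SimpleGraph.mem_edgeSet, hind] at this
      · exact G.mem_edgeSet.2 (htm v hv).2.1
    · -- matching disjointness
      have hmemC : ∀ (e' : Sym2 ((S ∪ T : Set V)ᶜ : Set V)) (u : V),
          u ∈ e'.map Subtype.val → u ∈ (S ∪ T : Set V)ᶜ := by
        intro e' u hu
        obtain ⟨a, -, rfl⟩ := Sym2.mem_map.1 hu
        exact a.2
      rintro e (⟨e1, he1, rfl⟩ | ⟨v1, hv1, rfl⟩) f (⟨e2, he2, rfl⟩ | ⟨v2, hv2, rfl⟩) v hve hvf
      · obtain ⟨a, ha, rfl⟩ := Sym2.mem_map.1 hve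
        obtain ⟨b, hb, hba⟩ := Sym2.mem_map.1 hvf
        obtain rfl : b = a := Subtype.ext hba
        exact congrArg _ (hP'd _ he1 _ he2 _ ha hb)
      · exfalso
        have h1 := hmemC e1 v hve
        rcases Sym2.mem_iff.1 hvf with rfl | rfl
        · exact h1 (Or.inl hv2)
        · exact h1 (Or.inr (htm v2 hv2).1)
      · exfalso
        have h1 := hmemC e2 v hvf
        rcases Sym2.mem_iff.1 hve with rfl | rfl
        · exact h1 (Or.inl hv1)
        · exact h1 (Or.inr (htm v1 hv1).1)
      · rcases Sym2.mem_iff.1 hve with h1 | h1 <;> rcases Sym2.mem_iff.1 hvf with h2 | h2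
        · obtain rfl : v1 = v2 := h1.symm.trans h2
          rfl
        · exfalso
          have h3 : v1 = tm v2 := h1.symm.trans h2
          exact Set.disjoint_left.mp hXY (hSX hv1)
            (by rw [h3]; exact hTY (htm v2 hv2).1)
        · exfalso
          have h3 : tm v1 = v2 := h1.symm.trans h2
          exact Set.disjoint_left.mp hXY (hSX hv2)
            (by rw [← h3]; exact hTY (htm v1 hv1).1)
        · have h3 : tm v1 = tm v2 := h1.symm.trans h2
          obtain rfl : v1 = v2 := by rw [← hsm_tm v1 hv1, ← hsm_tm v2 hv2, h3]
          rfl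
    · -- saturation
      intro v
      by_cases hvS : v ∈ S
      · exact ⟨s(v, tm v), Or.inr ⟨v, hvS, rfl⟩, by simp⟩
      by_cases hvT : v ∈ T
      · refine ⟨s(sm v, tm (sm v)), Or.inr ⟨sm v, (hsm v hvT).1, rfl⟩, ?_⟩
        rw [htm_sm v hvT]
        simp
      · have hvC : v ∈ (S ∪ T : Set V)ᶜ := fun h => h.elim hvS hvT
        refine ⟨_, Or.inl ⟨s(⟨v, hvC⟩, pa ⟨v, hvC⟩), hpa _, rfl⟩, ?_⟩
        rw [Sym2.map_pair_eq]
        simp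
    · -- bichromatic edges are in P
      have key : ∀ u w, G.Adj u w → c u = true → c w = false →
          ((∃ e' ∈ P', s(u, w) = e'.map Subtype.val) ∨ (∃ v ∈ S, s(u, w) = s(v, tm v))) := by
        intro u w hadj hcu hcw
        rcases hctrue u hcu with hX | ⟨hzu, hpu⟩
        · rcases hcfalse w hcw with hY | ⟨hzw, hpw⟩
          · by_cases huS : u ∈ S
            · have hw : w = tm u := (htm u huS).2.2 w hY hadj
              exact Or.inr ⟨u, huS, by rw [hw]⟩
            · exact absurd hadj (hXS u ⟨hX, huS⟩ w hY)
          · have huS : u ∉ S := fun hs => hZST w hzw u (Or.inl hs) hadj.symm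
            have m1 : u ∈ {t | t ∈ X \ S ∧ G.Adj w t} := ⟨⟨hX, huS⟩, hadj.symm⟩
            have m2 : (pa ⟨w, hZC w hzw⟩).1 ∈ {t | t ∈ X \ S ∧ G.Adj w t} :=
              ⟨hpw, hpaAdj ⟨w, hZC w hzw⟩⟩
            have h1 : u = (pa ⟨w, hZC w hzw⟩).1 := hZX w hzw m1 m2
            refine Or.inl ⟨s(pa ⟨w, hZC w hzw⟩, ⟨w, hZC w hzw⟩), ?_, ?_⟩
            · rw [Sym2.eq_swap]; exact hpa _
            · rw [Sym2.map_pair_eq, ← h1]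
        · rcases hcfalse w hcw with hY | ⟨hzw, -⟩
          · have hwT : w ∉ T := fun ht => hZST u hzu w (Or.inr ht) hadj
            have m1 : w ∈ {t | t ∈ Y \ T ∧ G.Adj u t} := ⟨⟨hY, hwT⟩, hadj⟩
            have m2 : (pa ⟨u, hZC u hzu⟩).1 ∈ {t | t ∈ Y \ T ∧ G.Adj u t} :=
              ⟨hpu, hpaAdj ⟨u, hZC u hzu⟩⟩
            have h1 : w = (pa ⟨u, hZC u hzu⟩).1 := hZY u hzu m1 m2
            refine Or.inl ⟨s(⟨u, hZC u hzu⟩, pa ⟨u, hZC u hzu⟩), hpa _, ?_⟩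
            rw [Sym2.map_pair_eq, ← h1]
          · exact absurd hadj (hZind u hzu w hzw)
      rintro e ⟨heE, u, w, rfl, hne⟩
      have hadj : G.Adj u w := G.mem_edgeSet.1 heE
      cases hcu : c u with
      | false =>
        have hcw : c w = true := bne2 _ (by rw [hcu] at hne; exact fun h => hne h.symm)
        rw [Sym2.eq_swap]
        exact key w u hadj.symm hcw hcu
      | true =>
        have hcw : c w = false := bne1 _ (by rw [hcu] at hne; exact fun h => hne h.symm)
        exact key u w hadj hcu hcw
end
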